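/- arXiv:math/0603621 — 8 statements merged into one kernel-verified Lean document; each statement's English description precedes it below -/
import Mathlib

section
/- Let X be a uniformly discrete metric space with bounded geometry. Then X has property A if and only if for all R, ε > 0 there exist vectors ξ_x ∈ ℓ¹(X) (x ∈ X) with ‖ξ_x‖₁ = 1 for all x, such that the family (ξ_x) has (R,ε)-variation, and there exists S > 0 such that for every x the support of ξ_x is contained in the closed ball of radius S about x. -/
open scoped ENNReal


open Metric

/-- A metric space is uniformly discrete if there is a uniform positive lower
bound on the distance between distinct points. -/
def UniformlyDiscrete (X : Type*) [MetricSpace X] : Prop :=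
  ∃ δ > (0:ℝ), ∀ x y : X, x ≠ y → δ ≤ dist x y

/-- A metric space has bounded geometry if balls of any fixed radius have
uniformly bounded (finite) cardinality. -/
def BoundedGeometry (X : Type*) [MetricSpace X] : Prop :=
  ∀ R > (0:ℝ), ∃ N : ℕ, ∀ x : X,
    (closedBall x R).Finite ∧ (closedBall x R).ncard ≤ N

/-- Yu's property A. -/
def HasPropertyA (X : Type*) [MetricSpace X] : Prop :=
  ∀ R > (0:ℝ), ∀ ε > (0:ℝ), ∃ A : X → Set (X × ℕ),
    (∀ x, (A x).Finite ∧ (A x).Nonempty) ∧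
    (∀ x y : X, dist x y < R →
      ((symmDiff (A x) (A y)).ncard : ℝ) < ε * ((A x ∩ A y).ncard : ℝ)) ∧
    ∃ S > (0:ℝ), ∀ x : X, ∀ p ∈ A x, dist x p.1 ≤ S

lemma memlp_of_fin {X : Type} (f : X → ℝ) (h : (Function.support f).Finite) :
    Memℓp f 1 := by
  apply memℓp_gen
  have : (fun i => ‖f i‖ ^ (1:ℝ≥0∞).toReal) = fun i => ‖f i‖ := by
    ext i; simp
  rw [this]
  apply summable_of_ne_finset_zero (s := h.toFinset)
  intro i hi
  simp only [Set.Finite.mem_toFinset, Function.mem_support, not_not] at hi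
  simp [hi]

lemma norm_lp1 {X : Type} (f : lp (fun _ : X => ℝ) 1) : ‖f‖ = ∑' z, |f z| := by
  have := lp.norm_eq_tsum_rpow (p := 1) (by norm_num) f
  simpa using this

lemma coe_mk_apply {X : Type} (f : X → ℝ) (hf : Memℓp f 1) (z : X) :
    ((⟨f, hf⟩ : lp (fun _ : X => ℝ) 1) : ∀ _ : X, ℝ) z = f z := rfl

lemma norm_mk_lp1 {X : Type} (f : X → ℝ) (hf : Memℓp f 1) :
    ‖(⟨f, hf⟩ : lp (fun _ : X => ℝ) 1)‖ = ∑' z, |f z| := by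
  rw [norm_lp1]

lemma norm_sub_mk_lp1 {X : Type} (f g : X → ℝ) (hf : Memℓp f 1) (hg : Memℓp g 1) :
    ‖(⟨f, hf⟩ : lp (fun _ : X => ℝ) 1) - ⟨g, hg⟩‖ = ∑' z, |f z - g z| := by
  rw [norm_lp1]
  apply tsum_congr
  intro z
  congr 1

set_option maxHeartbeats 2000000 in
lemma forward {X : Type} [MetricSpace X] (hA : HasPropertyA X) :
    ∀ R > (0:ℝ), ∀ ε > (0:ℝ), ∃ ξ : X → lp (fun _ : X => ℝ) 1,
      (∀ x : X, ‖ξ x‖ = 1) ∧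
      (∀ x y : X, dist x y ≤ R → ‖ξ x - ξ y‖ < ε) ∧
      ∃ S > (0:ℝ), ∀ x z : X, (ξ x : ∀ _ : X, ℝ) z ≠ 0 → dist x z ≤ S := by
  classical
  intro R hR ε hε
  obtain ⟨A, hA1, hA2, S, hS, hA3⟩ := hA (R+1) (by linarith) (ε/2) (by linarith)
  set F : X → Finset (X × ℕ) := fun x => (hA1 x).1.toFinset with hF
  have hFA : ∀ x, (F x : Set (X × ℕ)) = A x := fun x => (hA1 x).1.coe_toFinset
  have hFne : ∀ x, (F x).Nonempty := by
    intro x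
    rw [← Finset.coe_nonempty, hFA]; exact (hA1 x).2
  set c : X → X → ℕ := fun x z => ((F x).filter (fun (p : X × ℕ) => p.1 = z)).card with hc
  set a : X → ℝ := fun x => ((F x).card : ℝ) with ha
  have hapos : ∀ x, 0 < a x := by
    intro x
    simpa [ha] using (hFne x).card_pos
  set f : X → X → ℝ := fun x z => (c x z : ℝ) / a x with hf
  have hfnn : ∀ x z, 0 ≤ f x z := fun x z =>
    div_nonneg (Nat.cast_nonneg _) (hapos x).le
  have hzero : ∀ x z, z ∉ (F x).image Prod.fst → f x z = 0 := by
    intro x z hz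
    have : (F x).filter (fun (p : X × ℕ) => p.1 = z) = ∅ := by
      apply Finset.filter_false_of_mem
      intro p hp hpz
      exact hz (Finset.mem_image.2 ⟨p, hp, hpz⟩)
    simp [hf, hc, this]
  have hsuppfin : ∀ x, (Function.support (f x)).Finite := by
    intro x
    apply Set.Finite.subset ((F x).image Prod.fst).finite_toSet
    intro z hz
    by_contra hnz
    exact hz (hzero x z hnz)
  have hcard : ∀ x, ∀ T : Finset X, (F x).image Prod.fst ⊆ T →
      (F x).card = ∑ z ∈ T, c x z := by
    intro x T hT
    exact Finset.card_eq_sum_card_fiberwise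
      (fun p hp => hT (Finset.mem_image.2 ⟨p, hp, rfl⟩))
  have hcastsum : ∀ x, ∀ T : Finset X, (F x).image Prod.fst ⊆ T →
      ∑ z ∈ T, (c x z : ℝ) = a x := by
    intro x T hT
    show _ = ((F x).card : ℝ)
    rw [hcard x T hT]
    push_cast
    ring
  have hsum1 : ∀ x, ∀ T : Finset X, (F x).image Prod.fst ⊆ T →
      ∑ z ∈ T, f x z = 1 := by
    intro x T hT
    show ∑ z ∈ T, (c x z : ℝ) / a x = 1
    rw [← Finset.sum_div, hcastsum x T hT]
    exact div_self (hapos x).ne'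
  refine ⟨fun x => ⟨f x, memlp_of_fin _ (hsuppfin x)⟩, ?_, ?_, S, hS, ?_⟩
  · intro x
    rw [norm_mk_lp1]
    have h1 : ∑' z, |f x z| = ∑ z ∈ (F x).image Prod.fst, |f x z| := by
      apply tsum_eq_sum
      intro z hz; rw [hzero x z hz, abs_zero]
    rw [h1, Finset.sum_congr rfl (fun z _ => abs_of_nonneg (hfnn x z))]
    exact hsum1 x _ le_rfl
  · intro x y hxy
    have hD := hA2 x y (by linarith)
    have hsd : symmDiff (A x) (A y) = ↑(symmDiff (F x) (F y)) := by
      rw [Finset.coe_symmDiff, hFA, hFA]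
    have hint : A x ∩ A y = ↑(F x ∩ F y) := by
      rw [Finset.coe_inter, hFA, hFA]
    rw [hsd, hint, Set.ncard_coe_finset, Set.ncard_coe_finset] at hD
    set D : Finset (X × ℕ) := symmDiff (F x) (F y) with hDdef
    set T : Finset X := (F x).image Prod.fst ∪ (F y).image Prod.fst with hT
    have hTx : (F x).image Prod.fst ⊆ T := Finset.subset_union_left
    have hTy : (F y).image Prod.fst ⊆ T := Finset.subset_union_right
    set d : X → ℕ := fun z => (D.filter (fun (p : X × ℕ) => p.1 = z)).card with hd
    have hsubx : ∀ z, ((F x).filter (fun (p : X × ℕ) => p.1 = z)) \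
        ((F y).filter (fun (p : X × ℕ) => p.1 = z)) ⊆ D.filter (fun (p : X × ℕ) => p.1 = z) := by
      intro z p hp
      rw [Finset.mem_sdiff, Finset.mem_filter] at hp
      obtain ⟨⟨hpx, hpz⟩, hpny⟩ := hp
      rw [Finset.mem_filter]
      refine ⟨?_, hpz⟩
      rw [hDdef, Finset.mem_symmDiff]
      exact Or.inl ⟨hpx, fun h => hpny (Finset.mem_filter.2 ⟨h, hpz⟩)⟩
    have hsuby : ∀ z, ((F y).filter (fun (p : X × ℕ) => p.1 = z)) \
        ((F x).filter (fun (p : X × ℕ) => p.1 = z)) ⊆ D.filter (fun (p : X × ℕ) => p.1 = z) := by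
      intro z p hp
      rw [Finset.mem_sdiff, Finset.mem_filter] at hp
      obtain ⟨⟨hpy, hpz⟩, hpnx⟩ := hp
      rw [Finset.mem_filter]
      refine ⟨?_, hpz⟩
      rw [hDdef, Finset.mem_symmDiff]
      exact Or.inr ⟨hpy, fun h => hpnx (Finset.mem_filter.2 ⟨h, hpz⟩)⟩
    have hcd : ∀ z, |(c x z : ℝ) - (c y z : ℝ)| ≤ (d z : ℝ) := by
      intro z
      have h1 : c x z ≤ d z + c y z := le_trans Finset.card_le_card_sdiff_add_card
        (Nat.add_le_add_right (Finset.card_le_card (hsubx z)) _)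
      have h2 : c y z ≤ d z + c x z := le_trans Finset.card_le_card_sdiff_add_card
        (Nat.add_le_add_right (Finset.card_le_card (hsuby z)) _)
      rw [abs_sub_le_iff]
      constructor
      · have h := (Nat.cast_le (α := ℝ)).2 h1; push_cast at h; linarith
      · have h := (Nat.cast_le (α := ℝ)).2 h2; push_cast at h; linarith
    have hDsum : ∑ z ∈ T, (d z : ℝ) = (D.card : ℝ) := by
      have : D.card = ∑ z ∈ T, d z := by
        apply Finset.card_eq_sum_card_fiberwise
        intro p hp
        rw [hDdef, Finset.mem_coe, Finset.mem_symmDiff] at hp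
        rcases hp with ⟨h1, _⟩ | ⟨h1, _⟩
        · exact hTx (Finset.mem_image.2 ⟨p, h1, rfl⟩)
        · exact hTy (Finset.mem_image.2 ⟨p, h1, rfl⟩)
      rw [this]
      push_cast
      ring
    have haD : |a y - a x| ≤ (D.card : ℝ) := by
      have hyx : (F y \ F x) ⊆ D := by
        intro p hp
        rw [Finset.mem_sdiff] at hp
        rw [hDdef, Finset.mem_symmDiff]
        exact Or.inr hp
      have hxy' : (F x \ F y) ⊆ D := by
        intro p hp
        rw [Finset.mem_sdiff] at hp
        rw [hDdef, Finset.mem_symmDiff]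
        exact Or.inl hp
      have h1 : (F y).card ≤ D.card + (F x).card := le_trans
        Finset.card_le_card_sdiff_add_card (Nat.add_le_add_right (Finset.card_le_card hyx) _)
      have h2 : (F x).card ≤ D.card + (F y).card := le_trans
        Finset.card_le_card_sdiff_add_card (Nat.add_le_add_right (Finset.card_le_card hxy') _)
      have h1' := (Nat.cast_le (α := ℝ)).2 h1
      have h2' := (Nat.cast_le (α := ℝ)).2 h2
      push_cast at h1' h2'
      rw [abs_sub_le_iff]
      constructor
      · show ((F y).card : ℝ) - ((F x).card : ℝ) ≤ _
        linarith
      · show ((F x).card : ℝ) - ((F y).card : ℝ) ≤ _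
        linarith
    rw [norm_sub_mk_lp1]
    have key : ∑' z, |f x z - f y z| < ε := by
      have h1 : ∑' z, |f x z - f y z| = ∑ z ∈ T, |f x z - f y z| := by
        apply tsum_eq_sum
        intro z hz
        rw [hzero x z (fun h => hz (hTx h)), hzero y z (fun h => hz (hTy h)),
          sub_zero, abs_zero]
      rw [h1]
      calc ∑ z ∈ T, |f x z - f y z|
          ≤ ∑ z ∈ T, (|(c x z : ℝ) - (c y z : ℝ)| / a x +
              (c y z : ℝ) * |1 / a x - 1 / a y|) := by
            apply Finset.sum_le_sum
            intro z _
            have hax := (hapos x).ne'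
            have hay := (hapos y).ne'
            have heq : f x z - f y z = ((c x z : ℝ) - c y z) / a x +
                (c y z : ℝ) * (1 / a x - 1 / a y) := by
              show (c x z : ℝ) / a x - (c y z : ℝ) / a y = _
              field_simp
              ring
            rw [heq]
            refine (abs_add_le _ _).trans ?_
            rw [abs_div, abs_mul, abs_of_pos (hapos x), Nat.abs_cast]
        _ = (∑ z ∈ T, |(c x z : ℝ) - (c y z : ℝ)|) / a x +
              (∑ z ∈ T, (c y z : ℝ)) * |1 / a x - 1 / a y| := by
            rw [Finset.sum_add_distrib, ← Finset.sum_div, ← Finset.sum_mul]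
        _ ≤ (D.card : ℝ) / a x + (D.card : ℝ) / a x := by
            apply add_le_add
            · have hsum : ∑ z ∈ T, |(c x z : ℝ) - (c y z : ℝ)| ≤ (D.card : ℝ) := by
                rw [← hDsum]
                exact Finset.sum_le_sum (fun z _ => hcd z)
              exact (div_le_div_iff_of_pos_right (hapos x)).2 hsum
            · rw [hcastsum y T hTy]
              have habs : |1 / a x - 1 / a y| = |a y - a x| / (a x * a y) := by
                rw [div_sub_div _ _ (hapos x).ne' (hapos y).ne', one_mul, mul_one, abs_div,
                  abs_of_pos (mul_pos (hapos x) (hapos y))]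
              rw [habs]
              have hmul : a y * (|a y - a x| / (a x * a y)) = |a y - a x| / a x := by
                rw [mul_comm (a x) (a y), ← div_div, mul_div_assoc', mul_div_assoc',
                  mul_div_cancel_left₀ _ (hapos y).ne']
              rw [hmul]
              exact (div_le_div_iff_of_pos_right (hapos x)).2 haD
        _ < ε := by
            have hI : ((F x ∩ F y).card : ℝ) ≤ a x := by
              show _ ≤ ((F x).card : ℝ)
              exact_mod_cast Finset.card_le_card Finset.inter_subset_left
            have h2 : 2 * (D.card : ℝ) < ε * a x := by
              have h3 : ε / 2 * ((F x ∩ F y).card : ℝ) ≤ ε / 2 * a x :=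
                mul_le_mul_of_nonneg_left hI (by linarith)
              linarith
            rw [← add_div]
            rw [div_lt_iff₀ (hapos x)]
            linarith
    exact key
  · intro x z hz
    have hz' : f x z ≠ 0 := hz
    have hcz : ((F x).filter (fun (p : X × ℕ) => p.1 = z)).Nonempty := by
      rw [← Finset.card_ne_zero]
      intro h0
      apply hz'
      show (c x z : ℝ) / a x = 0
      have : c x z = 0 := h0
      rw [this]
      simp
    obtain ⟨p, hp⟩ := hcz
    rw [Finset.mem_filter] at hp
    have hpA : p ∈ A x := by
      rw [← hFA]
      exact_mod_cast hp.1
    have := hA3 x p hpA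
    rwa [hp.2] at this


lemma norm_lp1' {X : Type} (f : lp (fun _ : X => ℝ) 1) : ‖f‖ = ∑' z, |f z| := by
  have := lp.norm_eq_tsum_rpow (p := 1) (by norm_num) f
  simpa using this

lemma summable_abs_lp1 {X : Type} (f : lp (fun _ : X => ℝ) 1) :
    Summable (fun z => |f z|) := by
  have := (lp.memℓp f).summable (p := 1) (by norm_num)
  simpa using this

lemma sum_abs_le_norm_lp1 {X : Type} (f : lp (fun _ : X => ℝ) 1) (T : Finset X) :
    ∑ z ∈ T, |f z| ≤ ‖f‖ := by
  rw [norm_lp1']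
  exact Summable.sum_le_tsum T (fun z _ => abs_nonneg _) (summable_abs_lp1 f)

lemma card_symmDiff_range (a b : ℕ) :
    (symmDiff (Finset.range a) (Finset.range b)).card = (a - b) + (b - a) := by
  rcases le_total a b with h | h
  · rw [symmDiff_def, Finset.sup_eq_union,
      Finset.sdiff_eq_empty_iff_subset.2 (Finset.range_subset_range.2 h), Finset.empty_union,
      Finset.card_sdiff_of_subset (Finset.range_subset_range.2 h), Finset.card_range, Finset.card_range]
    omega
  · rw [symmDiff_def, Finset.sup_eq_union,
      Finset.sdiff_eq_empty_iff_subset.2 (Finset.range_subset_range.2 h), Finset.union_empty,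
      Finset.card_sdiff_of_subset (Finset.range_subset_range.2 h), Finset.card_range, Finset.card_range]
    omega

lemma cast_card_symmDiff_range_le {r s : ℝ} (hr : 0 ≤ r) (hs : 0 ≤ s) :
    ((symmDiff (Finset.range ⌊r⌋₊) (Finset.range ⌊s⌋₊)).card : ℝ) ≤ |r - s| + 1 := by
  rw [card_symmDiff_range]
  rcases le_total ⌊r⌋₊ ⌊s⌋₊ with h | h
  · rw [Nat.sub_eq_zero_of_le h, zero_add, Nat.cast_sub h]
    have h1 : (⌊s⌋₊ : ℝ) ≤ s := Nat.floor_le hs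
    have h2 : r < ⌊r⌋₊ + 1 := Nat.lt_floor_add_one r
    have h3 : s - r ≤ |r - s| := by rw [abs_sub_comm]; exact le_abs_self _
    linarith
  · rw [Nat.sub_eq_zero_of_le h, add_zero, Nat.cast_sub h]
    have h1 : (⌊r⌋₊ : ℝ) ≤ r := Nat.floor_le hr
    have h2 : s < ⌊s⌋₊ + 1 := Nat.lt_floor_add_one s
    have h3 : r - s ≤ |r - s| := le_abs_self _
    linarith

lemma filter_symmDiff' {α : Type*} [DecidableEq α] (s t : Finset α) (P : α → Prop)
    [DecidablePred P] :
    (symmDiff s t).filter P = symmDiff (s.filter P) (t.filter P) := by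
  ext p
  simp only [Finset.mem_filter, Finset.mem_symmDiff]
  tauto

lemma image_symmDiff' {α β : Type*} [DecidableEq α] [DecidableEq β] (s t : Finset α)
    {e : α → β} (he : Function.Injective e) :
    symmDiff (s.image e) (t.image e) = (symmDiff s t).image e := by
  rw [symmDiff_def, symmDiff_def, Finset.sup_eq_union, Finset.sup_eq_union,
    Finset.image_union, Finset.image_sdiff _ _ he, Finset.image_sdiff _ _ he]

set_option maxHeartbeats 2000000 in
lemma backward {X : Type} [MetricSpace X] (hbg : BoundedGeometry X)
    (h : ∀ R > (0:ℝ), ∀ ε > (0:ℝ), ∃ ξ : X → lp (fun _ : X => ℝ) 1,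
      (∀ x : X, ‖ξ x‖ = 1) ∧
      (∀ x y : X, dist x y ≤ R → ‖ξ x - ξ y‖ < ε) ∧
      ∃ S > (0:ℝ), ∀ x z : X, (ξ x : ∀ _ : X, ℝ) z ≠ 0 → dist x z ≤ S) :
    HasPropertyA X := by
  classical
  intro R hR ε hε
  set ε' : ℝ := min ε 1 / 4 with hε'def
  have hε'pos : 0 < ε' := by
    have : (0:ℝ) < min ε 1 := lt_min hε one_pos
    positivity
  have hε'ε : ε' ≤ ε / 4 := by
    have := min_le_left ε 1
    rw [hε'def]; linarith
  have hε'1 : ε' ≤ 1 / 4 := by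
    have := min_le_right ε 1
    rw [hε'def]; linarith
  obtain ⟨ξ, hn, hv, S, hSpos, hs⟩ := h R hR ε' hε'pos
  obtain ⟨N, hN⟩ := hbg S hSpos
  set g : X → X → ℝ := fun x z => |(ξ x : ∀ _ : X, ℝ) z| with hg
  have hgnn : ∀ x z, 0 ≤ g x z := fun x z => abs_nonneg _
  have hsfin : ∀ x, (Function.support (fun z => (ξ x : ∀ _ : X, ℝ) z)).Finite := by
    intro x
    apply Set.Finite.subset (hN x).1
    intro z hz
    rw [mem_closedBall, dist_comm]
    exact hs x z (Function.mem_support.1 hz)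
  set supp : X → Finset X := fun x => (hsfin x).toFinset with hsupp
  have hsuppmem : ∀ x z, z ∈ supp x ↔ (ξ x : ∀ _ : X, ℝ) z ≠ 0 := by
    intro x z
    rw [hsupp]
    simp [Set.Finite.mem_toFinset, Function.mem_support]
  have hgz : ∀ x z, z ∉ supp x → g x z = 0 := by
    intro x z hz
    rw [hsuppmem, not_not] at hz
    simp [hg, hz]
  have hcardN : ∀ x, (supp x).card ≤ N := by
    intro x
    have h1 : (supp x : Set X) ⊆ closedBall x S := by
      intro z hz
      rw [Finset.mem_coe, hsuppmem] at hz
      rw [mem_closedBall, dist_comm]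
      exact hs x z hz
    have h2 := Set.ncard_le_ncard h1 (hN x).1
    rw [Set.ncard_coe_finset] at h2
    exact h2.trans (hN x).2
  have hgT : ∀ x, ∀ T : Finset X, supp x ⊆ T → ∑ z ∈ T, g x z = 1 := by
    intro x T hT
    have h1 : ∑' z, g x z = ∑ z ∈ T, g x z := by
      apply tsum_eq_sum
      intro z hz
      exact hgz x z (fun hmem => hz (hT hmem))
    rw [← h1, ← norm_lp1' (ξ x), hn x]
  have hg1 : ∀ x z, g x z ≤ 1 := by
    intro x z
    by_cases hz : z ∈ supp x
    · rw [← hgT x (supp x) le_rfl]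
      exact Finset.single_le_sum (fun w _ => hgnn x w) hz
    · rw [hgz x z hz]; exact zero_le_one
  set k : ℕ := 7 * N + Nat.ceil ((4 * N : ℝ) / ε) + 1 with hk
  have hkN : N ≤ k := by omega
  have hk1 : 1 ≤ k := by omega
  have hkR : (6 * N : ℝ) + 4 * N / ε + 1 ≤ (k : ℝ) := by
    have h1 : ((4 * N : ℝ) / ε) ≤ (Nat.ceil ((4 * N : ℝ) / ε) : ℝ) := Nat.le_ceil _
    rw [hk]
    push_cast
    linarith
  set m : X → X → ℕ := fun x z => ⌊(k : ℝ) * g x z⌋₊ with hm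
  have hm_le : ∀ x z, (m x z : ℝ) ≤ (k : ℝ) * g x z := fun x z =>
    Nat.floor_le (by positivity)
  have hm_gt : ∀ x z, (k : ℝ) * g x z < (m x z : ℝ) + 1 := fun x z =>
    Nat.lt_floor_add_one _
  have hmk : ∀ x z, m x z ≤ k := by
    intro x z
    have h1 : (k : ℝ) * g x z ≤ (k : ℝ) := by
      nlinarith [hg1 x z, hgnn x z, Nat.cast_nonneg (α := ℝ) k]
    calc m x z ≤ ⌊(k : ℝ)⌋₊ := Nat.floor_le_floor h1
      _ = k := Nat.floor_natCast k
  have hmsupp : ∀ x z, m x z ≠ 0 → z ∈ supp x := by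
    intro x z hz
    by_contra hc
    apply hz
    rw [hm]
    simp [hgz x z hc]
  set AF : X → Finset (X × ℕ) := fun x =>
    (supp x ×ˢ Finset.range k).filter (fun p => p.2 < m x p.1) with hAF
  have hmemAF : ∀ x p, p ∈ AF x ↔ p.2 < m x p.1 := by
    intro x p
    rw [hAF]
    simp only [Finset.mem_filter, Finset.mem_product, Finset.mem_range]
    constructor
    · exact fun h => h.2
    · intro h
      exact ⟨⟨hmsupp x p.1 (by omega), lt_of_lt_of_le h (hmk x p.1)⟩, h⟩
  have hfib : ∀ x z, (AF x).filter (fun (p : X × ℕ) => p.1 = z) =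
      (Finset.range (m x z)).image (fun n => (z, n)) := by
    intro x z
    ext p
    rw [Finset.mem_filter, hmemAF]
    simp only [Finset.mem_image, Finset.mem_range]
    constructor
    · rintro ⟨h1, h2⟩
      exact ⟨p.2, by rw [← h2]; exact h1, by rw [← h2]⟩
    · rintro ⟨n, hn', rfl⟩
      exact ⟨hn', rfl⟩
  have hinj : ∀ z : X, Function.Injective (fun n : ℕ => (z, n)) := by
    intro z n1 n2 h
    simpa using h
  have hfibcard : ∀ x z, ((AF x).filter (fun (p : X × ℕ) => p.1 = z)).card = m x z := by
    intro x z
    rw [hfib, Finset.card_image_of_injective _ (hinj z), Finset.card_range]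
  have hfst : ∀ x p, p ∈ AF x → p.1 ∈ supp x := by
    intro x p hp
    rw [hAF, Finset.mem_filter, Finset.mem_product] at hp
    exact hp.1.1
  have hcardA : ∀ x, ∀ T : Finset X, supp x ⊆ T → (AF x).card = ∑ z ∈ T, m x z := by
    intro x T hT
    rw [Finset.card_eq_sum_card_fiberwise (f := Prod.fst) (t := T)
      (fun p hp => hT (hfst x p hp))]
    exact Finset.sum_congr rfl (fun z _ => hfibcard x z)
  have hlow : ∀ x, (k : ℝ) - N ≤ ((AF x).card : ℝ) := by
    intro x
    have h1 : (AF x).card = ∑ z ∈ supp x, m x z := hcardA x (supp x) le_rfl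
    have h2 : ∑ z ∈ supp x, ((k : ℝ) * g x z - 1) ≤ ∑ z ∈ supp x, (m x z : ℝ) := by
      apply Finset.sum_le_sum
      intro z _
      have := hm_gt x z
      linarith
    have h3 : ∑ z ∈ supp x, ((k : ℝ) * g x z - 1) =
        (k : ℝ) * (∑ z ∈ supp x, g x z) - (supp x).card := by
      rw [Finset.sum_sub_distrib, ← Finset.mul_sum]
      simp
    rw [h3, hgT x (supp x) le_rfl, mul_one] at h2
    have h4 : ((supp x).card : ℝ) ≤ N := by exact_mod_cast hcardN x
    have h5 : ((AF x).card : ℝ) = ∑ z ∈ supp x, (m x z : ℝ) := by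
      rw [h1]; push_cast; ring
    linarith [h2, h5.ge]
  have hne : ∀ x, (AF x).Nonempty := by
    intro x
    have hsne : (supp x).Nonempty := by
      rw [← Finset.card_pos]
      by_contra hc
      push_neg at hc
      interval_cases h : (supp x).card
      · have := hgT x (supp x) le_rfl
        rw [Finset.card_eq_zero.1 h] at this
        simp at this
    obtain ⟨z, hz, hgez⟩ := Finset.exists_le_of_sum_le hsne
      (le_of_eq (by
        rw [hgT x (supp x) le_rfl, Finset.sum_const, nsmul_eq_mul]
        field_simp) :
        ∑ _z ∈ supp x, (1 : ℝ) / (supp x).card ≤ ∑ z ∈ supp x, g x z)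
    have hcpos : 0 < (supp x).card := Finset.card_pos.2 hsne
    have hck : ((supp x).card : ℝ) ≤ (k : ℝ) := by
      exact_mod_cast (hcardN x).trans hkN
    have h1 : (1 : ℝ) ≤ (k : ℝ) * g x z := by
      have hcpos' : (0:ℝ) < (supp x).card := by exact_mod_cast hcpos
      have h2 : (k : ℝ) * ((1:ℝ) / (supp x).card) ≤ (k : ℝ) * g x z :=
        mul_le_mul_of_nonneg_left hgez (Nat.cast_nonneg _)
      have h3 : (1 : ℝ) ≤ (k : ℝ) * ((1:ℝ) / (supp x).card) := by
        rw [mul_one_div, le_div_iff₀ hcpos', one_mul]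
        exact hck
      linarith
    have hm1 : 1 ≤ m x z := Nat.le_floor (by exact_mod_cast h1)
    exact ⟨(z, 0), (hmemAF x (z, 0)).2 (show 0 < m x z by omega)⟩
  refine ⟨fun x => ↑(AF x), fun x => ⟨(AF x).finite_toSet, by
    rw [Finset.coe_nonempty]; exact hne x⟩, ?_, S, hSpos, ?_⟩
  · intro x y hxy
    have hvar := hv x y hxy.le
    set T : Finset X := supp x ∪ supp y with hT
    have hTx : supp x ⊆ T := Finset.subset_union_left
    have hTy : supp y ⊆ T := Finset.subset_union_right
    have hTcard : (T.card : ℝ) ≤ 2 * N := by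
      have := (Finset.card_union_le (supp x) (supp y)).trans
        (Nat.add_le_add (hcardN x) (hcardN y))
      have h' : T.card ≤ 2 * N := by rw [hT]; omega
      exact_mod_cast h'
    set D : Finset (X × ℕ) := symmDiff (AF x) (AF y) with hD
    have hsd : symmDiff (↑(AF x) : Set (X × ℕ)) (↑(AF y)) = ↑D := by
      rw [hD, Finset.coe_symmDiff]
    have hic : (↑(AF x) : Set (X × ℕ)) ∩ ↑(AF y) = ↑(AF x ∩ AF y) := by
      rw [Finset.coe_inter]
    rw [hsd, hic, Set.ncard_coe_finset, Set.ncard_coe_finset]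
    -- bound on D.card
    have hDfib : ∀ z : X, (D.filter (fun (p : X × ℕ) => p.1 = z)).card =
        (symmDiff (Finset.range (m x z)) (Finset.range (m y z))).card := by
      intro z
      rw [hD, filter_symmDiff', hfib x z, hfib y z, image_symmDiff' _ _ (hinj z),
        Finset.card_image_of_injective _ (hinj z)]
    have hDcard : (D.card : ℝ) < (k : ℝ) * ε' + 2 * N := by
      have h1 : D.card = ∑ z ∈ T, (D.filter (fun (p : X × ℕ) => p.1 = z)).card := by
        apply Finset.card_eq_sum_card_fiberwise
        intro p hp
        rw [hD, Finset.mem_coe, Finset.mem_symmDiff] at hp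
        rcases hp with ⟨h1, _⟩ | ⟨h1, _⟩
        · exact hTx (hfst x p h1)
        · exact hTy (hfst y p h1)
      have h2 : ∀ z ∈ T, ((D.filter (fun (p : X × ℕ) => p.1 = z)).card : ℝ) ≤
          (k : ℝ) * |g x z - g y z| + 1 := by
        intro z _
        rw [hDfib z]
        have := cast_card_symmDiff_range_le (r := (k : ℝ) * g x z) (s := (k : ℝ) * g y z)
          (by positivity) (by positivity)
        calc ((symmDiff (Finset.range (m x z)) (Finset.range (m y z))).card : ℝ)
            ≤ |(k : ℝ) * g x z - (k : ℝ) * g y z| + 1 := this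
          _ = (k : ℝ) * |g x z - g y z| + 1 := by
              rw [← mul_sub, abs_mul, Nat.abs_cast]
      have h3 : ∑ z ∈ T, |g x z - g y z| ≤ ‖ξ x - ξ y‖ := by
        have h4 : ∀ z ∈ T, |g x z - g y z| ≤ |((ξ x - ξ y : lp (fun _ : X => ℝ) 1) :
            ∀ _ : X, ℝ) z| := by
          intro z _
          rw [lp.coeFn_sub, Pi.sub_apply]
          exact abs_abs_sub_abs_le_abs_sub _ _
        calc ∑ z ∈ T, |g x z - g y z|
            ≤ ∑ z ∈ T, |((ξ x - ξ y : lp (fun _ : X => ℝ) 1) : ∀ _ : X, ℝ) z| :=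
              Finset.sum_le_sum h4
          _ ≤ ‖ξ x - ξ y‖ := sum_abs_le_norm_lp1 _ T
      have h5 : ((D.card : ℝ)) ≤ (k : ℝ) * (∑ z ∈ T, |g x z - g y z|) + T.card := by
        rw [h1, Nat.cast_sum]
        calc ∑ z ∈ T, ((D.filter (fun (p : X × ℕ) => p.1 = z)).card : ℝ)
            ≤ ∑ z ∈ T, ((k : ℝ) * |g x z - g y z| + 1) := Finset.sum_le_sum h2
          _ = (k : ℝ) * (∑ z ∈ T, |g x z - g y z|) + T.card := by
              rw [Finset.sum_add_distrib, ← Finset.mul_sum, Finset.sum_const,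
                nsmul_eq_mul, mul_one]
      have hk0 : (0:ℝ) < (k : ℝ) := by exact_mod_cast hk1
      have h6 : (k : ℝ) * (∑ z ∈ T, |g x z - g y z|) < (k : ℝ) * ε' := by
        apply mul_lt_mul_of_pos_left _ hk0
        exact lt_of_le_of_lt h3 hvar
      linarith
    -- intersection lower bound
    have hIA : ((AF x).card : ℝ) ≤ ((AF x ∩ AF y).card : ℝ) + (D.card : ℝ) := by
      have hsub : AF x ⊆ (AF x ∩ AF y) ∪ D := by
        intro p hp
        rw [Finset.mem_union, Finset.mem_inter]
        by_cases hpy : p ∈ AF y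
        · exact Or.inl ⟨hp, hpy⟩
        · exact Or.inr (by rw [hD, Finset.mem_symmDiff]; exact Or.inl ⟨hp, hpy⟩)
      have := (Finset.card_le_card hsub).trans (Finset.card_union_le _ _)
      exact_mod_cast this
    -- final arithmetic
    set dd : ℝ := (D.card : ℝ) with hdd
    set ii : ℝ := ((AF x ∩ AF y).card : ℝ) with hii
    have hii0 : 0 ≤ ii := Nat.cast_nonneg _
    have hdd0 : 0 ≤ dd := Nat.cast_nonneg _
    have h_ii : (k : ℝ) - N - dd ≤ ii := by
      have := hlow x
      linarith
    have hmul : ε * ((k : ℝ) - N - dd) ≤ ε * ii := mul_le_mul_of_nonneg_left h_ii hε.le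
    have q1 : (k : ℝ) * ε' ≤ (k : ℝ) * (ε / 4) :=
      mul_le_mul_of_nonneg_left hε'ε (Nat.cast_nonneg _)
    have q2 : ε * ((k : ℝ) * ε') ≤ ε * ((k : ℝ) * (1 / 4)) :=
      mul_le_mul_of_nonneg_left
        (mul_le_mul_of_nonneg_left hε'1 (Nat.cast_nonneg _)) hε.le
    have q3 : ε / 2 * ((6 * N : ℝ) + 4 * N / ε + 1) = 3 * ε * N + 2 * N + ε / 2 := by
      field_simp
      ring
    have q4 : ε / 2 * ((6 * N : ℝ) + 4 * N / ε + 1) ≤ ε / 2 * (k : ℝ) :=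
      mul_le_mul_of_nonneg_left hkR (by linarith)
    have hdd' : ε * dd ≤ ε * ((k : ℝ) * ε' + 2 * N) :=
      mul_le_mul_of_nonneg_left hDcard.le hε.le
    -- goal : dd < ε * ii
    have hfinal : dd < ε * ((k : ℝ) - N - dd) := by
      nlinarith [hDcard, q1, q2, q3, q4, hdd', hε.le]
    linarith
  · intro x p hp
    rw [Finset.mem_coe] at hp
    have h1 := hfst x p hp
    rw [hsuppmem] at h1
    exact hs x p.1 h1


theorem stmt0 (X : Type) [MetricSpace X]
    (hud : UniformlyDiscrete X) (hbg : BoundedGeometry X) :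
    HasPropertyA X ↔
      ∀ R > (0:ℝ), ∀ ε > (0:ℝ), ∃ ξ : X → lp (fun _ : X => ℝ) 1,
        (∀ x : X, ‖ξ x‖ = 1) ∧
        (∀ x y : X, dist x y ≤ R → ‖ξ x - ξ y‖ < ε) ∧
        ∃ S > (0:ℝ), ∀ x z : X, (ξ x : ∀ _ : X, ℝ) z ≠ 0 → dist x z ≤ S :=
  ⟨fun hA => forward hA, fun h => backward hbg h⟩
end

section
/- Let X be a uniformly discrete metric space with bounded geometry. Suppose there exists δ < 1 such that for all R, ε > 0 there exist unit vectors ξ_x ∈ ℓ²(X) (x ∈ X) such that the family (ξ_x) has (R,ε)-variation and there exists S > 0 such that for all x the restriction of ξ_x to the ball B_S(x) has norm at least 1 − δ and the restriction of ξ_x to the set B_{R+S}(x) \ B_S(x) has norm at most ε. Then for all R, ε > 0 there exist unit vectors ξ_x ∈ ℓ²(X) with (R,ε)-variation and S > 0 such that the support of each ξ_x is contained in the closed ball of radius S about x. -/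
open Metric

section helpers

variable {X : Type}

lemma norm_indicator_le' (s : Set X) (f : X → ℝ) (i : X) :
    ‖s.indicator f i‖ ≤ ‖f i‖ := by
  by_cases h : i ∈ s <;>
    simp [Set.indicator_of_mem, Set.indicator_of_notMem, h, norm_nonneg]

lemma memℓp_indicator (s : Set X) (f : X → ℝ) (hf : Memℓp f 2) :
    Memℓp (s.indicator f) 2 := by
  apply memℓp_gen
  have h2 : (0:ℝ) < (2:ENNReal).toReal := by norm_num
  refine Summable.of_nonneg_of_le (fun i => ?_) (fun i => ?_) (hf.summable h2)
  · positivity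
  · exact Real.rpow_le_rpow (norm_nonneg _) (norm_indicator_le' s f i) (by norm_num)

noncomputable def trunc (s : Set X) (f : lp (fun _ : X => ℝ) 2) : lp (fun _ : X => ℝ) 2 :=
  ⟨s.indicator f, memℓp_indicator s f (lp.memℓp f)⟩

@[simp] lemma trunc_apply (s : Set X) (f : lp (fun _ : X => ℝ) 2) (z : X) :
    (trunc s f : ∀ _ : X, ℝ) z = s.indicator f z := rfl

lemma norm_eq_sqrt (f : lp (fun _ : X => ℝ) 2) :
    ‖f‖ = Real.sqrt (∑' z : X, ((f : ∀ _ : X, ℝ) z)^2) := by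
  have h2 : (0:ℝ) < (2:ENNReal).toReal := by norm_num
  rw [lp.norm_eq_tsum_rpow h2 f, Real.sqrt_eq_rpow]
  norm_num

lemma summable_sq (f : lp (fun _ : X => ℝ) 2) :
    Summable (fun z : X => ((f : ∀ _ : X, ℝ) z)^2) := by
  have h2 : (0:ℝ) < (2:ENNReal).toReal := by norm_num
  have := (lp.memℓp f).summable h2
  convert this using 2 with z
  rw [Real.norm_eq_abs, show ((2:ENNReal).toReal) = ((2:ℕ):ℝ) by norm_num,
    Real.rpow_natCast]
  simp [sq_abs]

lemma norm_le_norm_of_pointwise (f g : lp (fun _ : X => ℝ) 2)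
    (h : ∀ z, |(f : ∀ _ : X, ℝ) z| ≤ |(g : ∀ _ : X, ℝ) z|) : ‖f‖ ≤ ‖g‖ := by
  rw [norm_eq_sqrt, norm_eq_sqrt]
  apply Real.sqrt_le_sqrt
  refine Summable.tsum_le_tsum (fun z => ?_) ?_ (summable_sq g)
  · rw [← sq_abs ((f : ∀ _ : X, ℝ) z), ← sq_abs ((g : ∀ _ : X, ℝ) z)]
    exact pow_le_pow_left₀ (abs_nonneg _) (h z) 2
  · exact summable_sq f

lemma norm_trunc_eq (s : Set X) (f : lp (fun _ : X => ℝ) 2) :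
    ‖trunc s f‖ = Real.sqrt (∑' z : s, ((f : ∀ _ : X, ℝ) z.1)^2) := by
  rw [norm_eq_sqrt, tsum_subtype s (fun z => ((f : ∀ _ : X, ℝ) z)^2)]
  congr 1
  apply tsum_congr
  intro z
  by_cases h : z ∈ s <;>
    simp [Set.indicator_of_mem, Set.indicator_of_notMem, h]

lemma norm_trunc_le (s : Set X) (f : lp (fun _ : X => ℝ) 2) : ‖trunc s f‖ ≤ ‖f‖ := by
  refine norm_le_norm_of_pointwise _ _ (fun z => ?_)
  simpa [Real.norm_eq_abs] using norm_indicator_le' s (f : ∀ _ : X, ℝ) z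

lemma norm_trunc_mono {s t : Set X} (hst : s ⊆ t) (f : lp (fun _ : X => ℝ) 2) :
    ‖trunc s f‖ ≤ ‖trunc t f‖ := by
  refine norm_le_norm_of_pointwise _ _ (fun z => ?_)
  by_cases h : z ∈ s
  · simp [Set.indicator_of_mem, h, hst h, le_refl]
  · simp [Set.indicator_of_notMem, h, abs_nonneg]

lemma trunc_sub (s : Set X) (f g : lp (fun _ : X => ℝ) 2) :
    trunc s (f - g) = trunc s f - trunc s g := by
  ext z
  simp only [lp.coeFn_sub, Pi.sub_apply, trunc_apply]
  by_cases h : z ∈ s <;>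
    simp [Set.indicator_of_mem, Set.indicator_of_notMem, h, lp.coeFn_sub, Pi.sub_apply]

lemma decomp_trunc (Bx By : Set X) (f g : lp (fun _ : X => ℝ) 2) :
    trunc Bx f - trunc By g
      = trunc Bx (f - g) + trunc (Bx \ By) g - trunc (By \ Bx) g := by
  ext z
  simp only [lp.coeFn_sub, lp.coeFn_add, Pi.sub_apply, Pi.add_apply, trunc_apply]
  by_cases hx : z ∈ Bx <;> by_cases hy : z ∈ By <;>
    simp [Set.indicator_apply, Set.mem_diff, hx, hy, lp.coeFn_sub, Pi.sub_apply] <;> ring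

lemma norm_normalize_sub_le {V : Type*} [NormedAddCommGroup V] [NormedSpace ℝ V]
    (a b : V) (c : ℝ) (hc : 0 < c) (ha : c ≤ ‖a‖) (hb : c ≤ ‖b‖) :
    ‖‖a‖⁻¹ • a - ‖b‖⁻¹ • b‖ ≤ 2 * ‖a - b‖ / c := by
  have ha0 : (0:ℝ) < ‖a‖ := lt_of_lt_of_le hc ha
  have hb0 : (0:ℝ) < ‖b‖ := lt_of_lt_of_le hc hb
  have key : ‖a‖⁻¹ • a - ‖b‖⁻¹ • b = ‖a‖⁻¹ • (a - b) + (‖a‖⁻¹ - ‖b‖⁻¹) • b := by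
    rw [smul_sub, sub_smul]; abel
  have h1 : ‖‖a‖⁻¹ • (a - b)‖ ≤ ‖a - b‖ / c := by
    rw [norm_smul, norm_inv, norm_norm, div_eq_inv_mul]
    gcongr
  have h2 : ‖(‖a‖⁻¹ - ‖b‖⁻¹) • b‖ ≤ ‖a - b‖ / c := by
    rw [norm_smul, Real.norm_eq_abs]
    have habs : |‖a‖⁻¹ - ‖b‖⁻¹| = |‖b‖ - ‖a‖| / (‖a‖ * ‖b‖) := by
      rw [inv_sub_inv ha0.ne' hb0.ne', abs_div, abs_of_pos (mul_pos ha0 hb0)]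
    rw [habs]
    have h3 : |‖b‖ - ‖a‖| / (‖a‖ * ‖b‖) * ‖b‖ = |‖b‖ - ‖a‖| / ‖a‖ := by
      field_simp
    rw [h3]
    have h4 : |‖b‖ - ‖a‖| ≤ ‖a - b‖ := by
      rw [norm_sub_rev]
      exact abs_norm_sub_norm_le b a
    gcongr
  calc ‖‖a‖⁻¹ • a - ‖b‖⁻¹ • b‖
      ≤ ‖‖a‖⁻¹ • (a - b)‖ + ‖(‖a‖⁻¹ - ‖b‖⁻¹) • b‖ := by rw [key]; exact norm_add_le _ _
    _ ≤ ‖a - b‖ / c + ‖a - b‖ / c := add_le_add h1 h2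
    _ = 2 * ‖a - b‖ / c := by ring

end helpers

theorem stmt2 (X : Type) [MetricSpace X]
    (hud : UniformlyDiscrete X) (hbg : BoundedGeometry X)
    (h : ∃ δ : ℝ, δ < 1 ∧
      ∀ R > (0:ℝ), ∀ ε > (0:ℝ), ∃ ξ : X → lp (fun _ : X => ℝ) 2,
        (∀ x : X, ‖ξ x‖ = 1) ∧
        (∀ x y : X, dist x y ≤ R → ‖ξ x - ξ y‖ < ε) ∧
        ∃ S > (0:ℝ), ∀ x : X,
          (1 - δ ≤ Real.sqrt (∑' z : (closedBall x S : Set X), ((ξ x : ∀ _ : X, ℝ) z.1)^2)) ∧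
          (Real.sqrt (∑' z : ((closedBall x (R + S) \ closedBall x S : Set X)),
              ((ξ x : ∀ _ : X, ℝ) z.1)^2) ≤ ε)) :
    ∀ R > (0:ℝ), ∀ ε > (0:ℝ), ∃ ξ : X → lp (fun _ : X => ℝ) 2,
      (∀ x : X, ‖ξ x‖ = 1) ∧
      (∀ x y : X, dist x y ≤ R → ‖ξ x - ξ y‖ < ε) ∧
      ∃ S > (0:ℝ), ∀ x z : X, (ξ x : ∀ _ : X, ℝ) z ≠ 0 → dist x z ≤ S := by
  obtain ⟨δ, hδ1, hmain⟩ := h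
  intro R hR ε hε
  set c : ℝ := 1 - δ with hcdef
  have hc : 0 < c := by simp [hcdef]; linarith
  set ε' : ℝ := ε * c / 16 with hε'def
  have hε' : 0 < ε' := by positivity
  obtain ⟨ξ, hunit, hvar, S, hS, hloc⟩ := hmain R hR ε' hε'
  -- truncated vectors
  set a : X → lp (fun _ : X => ℝ) 2 := fun x => trunc (closedBall x S) (ξ x) with hadef
  have hna : ∀ x, c ≤ ‖a x‖ := by
    intro x
    rw [hadef, norm_trunc_eq]
    exact (hloc x).1
  have hna0 : ∀ x, (0:ℝ) < ‖a x‖ := fun x => lt_of_lt_of_le hc (hna x)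
  -- annulus bound
  have hann : ∀ x, ‖trunc (closedBall x (R + S) \ closedBall x S) (ξ x)‖ ≤ ε' := by
    intro x
    rw [norm_trunc_eq]
    exact (hloc x).2
  -- key estimate
  have hab : ∀ x y : X, dist x y ≤ R → ‖a x - a y‖ ≤ 4 * ε' := by
    intro x y hxy
    rw [hadef]
    rw [decomp_trunc]
    have ht1 : ‖trunc (closedBall x S) (ξ x - ξ y)‖ ≤ ε' :=
      le_trans (norm_trunc_le _ _) (le_of_lt (hvar x y hxy))
    have hsub1 : closedBall x S \ closedBall y S
        ⊆ closedBall y (R + S) \ closedBall y S := by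
      rintro z ⟨hz1, hz2⟩
      refine ⟨?_, hz2⟩
      rw [mem_closedBall] at hz1 ⊢
      calc dist z y ≤ dist z x + dist x y := dist_triangle z x y
        _ ≤ S + R := add_le_add hz1 hxy
        _ = R + S := by ring
    have ht2 : ‖trunc (closedBall x S \ closedBall y S) (ξ y)‖ ≤ ε' :=
      le_trans (norm_trunc_mono hsub1 _) (hann y)
    have hsub2 : closedBall y S \ closedBall x S
        ⊆ closedBall x (R + S) \ closedBall x S := by
      rintro z ⟨hz1, hz2⟩
      refine ⟨?_, hz2⟩
      rw [mem_closedBall] at hz1 ⊢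
      calc dist z x ≤ dist z y + dist y x := dist_triangle z y x
        _ ≤ S + R := add_le_add hz1 (by rwa [dist_comm])
        _ = R + S := by ring
    have ht3 : ‖trunc (closedBall y S \ closedBall x S) (ξ y)‖ ≤ 2 * ε' := by
      set T := closedBall y S \ closedBall x S with hTdef
      have heq : trunc T (ξ y) = trunc T (ξ x) + (trunc T (ξ y) - trunc T (ξ x)) := by abel
      calc ‖trunc T (ξ y)‖
          ≤ ‖trunc T (ξ x)‖ + ‖trunc T (ξ y) - trunc T (ξ x)‖ := by
            nth_rewrite 1 [heq]; exact norm_add_le _ _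
        _ ≤ ε' + ε' := by
            refine add_le_add (le_trans (norm_trunc_mono hsub2 _) (hann x)) ?_
            rw [← trunc_sub]
            refine le_trans (norm_trunc_le _ _) ?_
            rw [norm_sub_rev]
            exact le_of_lt (hvar x y hxy)
        _ = 2 * ε' := by ring
    calc ‖trunc (closedBall x S) (ξ x - ξ y)
            + trunc (closedBall x S \ closedBall y S) (ξ y)
            - trunc (closedBall y S \ closedBall x S) (ξ y)‖
        ≤ ‖trunc (closedBall x S) (ξ x - ξ y)
            + trunc (closedBall x S \ closedBall y S) (ξ y)‖
          + ‖trunc (closedBall y S \ closedBall x S) (ξ y)‖ := norm_sub_le _ _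
      _ ≤ ‖trunc (closedBall x S) (ξ x - ξ y)‖
          + ‖trunc (closedBall x S \ closedBall y S) (ξ y)‖
          + ‖trunc (closedBall y S \ closedBall x S) (ξ y)‖ := by
            have := norm_add_le (trunc (closedBall x S) (ξ x - ξ y))
              (trunc (closedBall x S \ closedBall y S) (ξ y))
            linarith
      _ ≤ ε' + ε' + 2 * ε' := by linarith
      _ = 4 * ε' := by ring
  -- normalized vectors
  refine ⟨fun x => ‖a x‖⁻¹ • a x, ?_, ?_, S, hS, ?_⟩
  · intro x
    rw [norm_smul, norm_inv, norm_norm, inv_mul_cancel₀ (hna0 x).ne']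
  · intro x y hxy
    have h1 : ‖‖a x‖⁻¹ • a x - ‖a y‖⁻¹ • a y‖ ≤ 2 * ‖a x - a y‖ / c :=
      norm_normalize_sub_le _ _ c hc (hna x) (hna y)
    have h2 : 2 * ‖a x - a y‖ / c ≤ 2 * (4 * ε') / c := by
      rw [div_eq_mul_inv, div_eq_mul_inv]
      refine mul_le_mul_of_nonneg_right ?_ (inv_nonneg.mpr hc.le)
      linarith [hab x y hxy]
    have h3 : 2 * (4 * ε') / c = ε / 2 := by
      rw [hε'def]
      field_simp
      ring
    linarith
  · intro x z hz
    by_contra hdist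
    apply hz
    have hzS : z ∉ closedBall x S := by
      rw [mem_closedBall]
      rwa [dist_comm] at hdist
    rw [lp.coeFn_smul, Pi.smul_apply, hadef, trunc_apply,
      Set.indicator_of_notMem hzS, smul_zero]
end

section
/- Let X be a countable metric space, R > 0, and n ∈ ℕ, and suppose every closed ball of radius R in X contains at most n points. Then X can be written as a disjoint union X = X_1 ∪ ⋯ ∪ X_n such that any two distinct points in the same X_i are at distance greater than R. In particular, a uniformly discrete metric space with bounded geometry is, for every R > 0, a finite disjoint union of R-separated subsets (subsets in which distinct points are at distance at least R). -/
/-!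
Colour the points greedily along a well-ordering of `X`: a point `x` only has to avoid the colours
already given to the earlier points of `closedBall x R \ {x}`, and there are fewer than `n` of
them, so one of the `n` colours is always free.
-/

open Metric

theorem exists_notMem_range_of_ncard_lt {V : Type*} {s : Set V} (hs : s.Finite) {n : ℕ}
    (hcard : s.ncard < n) {p : V → Prop} (f : ∀ w, p w → Fin n) :
    ∃ k, k ∉ Set.range fun w : {w : s // p w} => f w w.2 := by
  have : Finite s := hs
  by_contra! hsurj
  have := Nat.card_le_card_of_surjective _ fun k => hsurj k
  have := Finite.card_subtype_le fun w : s => p w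
  simp only [Nat.card_eq_fintype_card, Fintype.card_fin, Nat.card_coe_set_eq] at *
  omega

namespace SimpleGraph

variable {V : Type*} {G : SimpleGraph V} {n : ℕ}

theorem colorable_of_ncard_neighborSet_lt
    (h : ∀ v, (G.neighborSet v).Finite ∧ (G.neighborSet v).ncard < n) : G.Colorable n := by
  let r : V → V → Prop := WellOrderingRel
  let fresh (v : V) (f : ∀ w, r w v → Fin n) : Fin n :=
    (exists_notMem_range_of_ncard_lt (h v).1 (h v).2 f).choose
  let c : V → Fin n := IsWellFounded.fix r fresh
  have hc : ∀ v w, G.Adj v w → r w v → c v ≠ c w := by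
    intro v w hvw hwv hcvw
    have hfresh := (exists_notMem_range_of_ncard_lt (h v).1 (h v).2
      fun w (_ : r w v) => c w).choose_spec
    have hcv : c v = fresh v fun w _ => c w := IsWellFounded.fix_eq r fresh v
    exact hfresh ⟨⟨⟨w, hvw⟩, hwv⟩, hcvw.symm.trans hcv⟩
  refine ⟨Coloring.mk c fun {v w} hvw => ?_⟩
  rcases trichotomous_of r v w with hvw' | rfl | hwv
  · exact (hc w v hvw.symm hvw').symm
  · exact (G.irrefl hvw).elim
  · exact hc v w hvw hwv

end SimpleGraph

def ripsGraph (X : Type*) [PseudoMetricSpace X] (R : ℝ) : SimpleGraph X where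
  Adj x y := x ≠ y ∧ dist x y ≤ R
  symm := ⟨fun x y h => ⟨h.1.symm, dist_comm x y ▸ h.2⟩⟩
  loopless := ⟨fun _ h => h.1 rfl⟩

theorem ripsGraph_neighborSet {X : Type*} [PseudoMetricSpace X] (R : ℝ) (x : X) :
    (ripsGraph X R).neighborSet x = closedBall x R \ {x} := by
  ext y
  simp [SimpleGraph.neighborSet, ripsGraph, dist_comm, ne_comm, and_comm]

theorem exists_fin_coloring_of_ncard_closedBall_le {X : Type*} [PseudoMetricSpace X] {R : ℝ}
    (hR : 0 ≤ R) {n : ℕ} (hball : ∀ x : X, (closedBall x R).Finite ∧ (closedBall x R).ncard ≤ n) :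
    ∃ c : X → Fin n, ∀ x y, x ≠ y → c x = c y → R < dist x y := by
  obtain ⟨c⟩ := (ripsGraph X R).colorable_of_ncard_neighborSet_lt fun x => by
    rw [ripsGraph_neighborSet]
    exact ⟨(hball x).1.sdiff, (Set.ncard_sdiff_singleton_lt_of_mem (mem_closedBall_self hR)
      (hball x).1).trans_le (hball x).2⟩
  exact ⟨c, fun x y hxy hcxy => not_le.mp fun hd => c.valid ⟨hxy, hd⟩ hcxy⟩

theorem stmt8_general (X : Type) [MetricSpace X]
    (R : ℝ) (hR : 0 < R) (n : ℕ)
    (hball : ∀ x : X, (closedBall x R).Finite ∧ (closedBall x R).ncard ≤ n) :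
    (∃ c : X → Fin n, ∀ x y : X, x ≠ y → c x = c y → R < dist x y) ∧
    (∀ (Z : Type) [MetricSpace Z], UniformlyDiscrete Z → BoundedGeometry Z →
      ∀ R' > (0:ℝ), ∃ (m : ℕ) (c : Z → Fin m),
        ∀ x y : Z, x ≠ y → c x = c y → R' ≤ dist x y) := by
  refine ⟨exists_fin_coloring_of_ncard_closedBall_le hR.le hball, fun Z _ _ hZ R' hR' => ?_⟩
  obtain ⟨N, hN⟩ := hZ R' hR'
  obtain ⟨c, hc⟩ := exists_fin_coloring_of_ncard_closedBall_le hR'.le hN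
  exact ⟨N, c, fun x y hxy hcxy => (hc x y hxy hcxy).le⟩

theorem stmt8 (X : Type) [MetricSpace X] [Countable X]
    (R : ℝ) (hR : 0 < R) (n : ℕ)
    (hball : ∀ x : X, (closedBall x R).Finite ∧ (closedBall x R).ncard ≤ n) :
    (∃ c : X → Fin n, ∀ x y : X, x ≠ y → c x = c y → R < dist x y) ∧
    (∀ (Z : Type) [MetricSpace Z], UniformlyDiscrete Z → BoundedGeometry Z →
      ∀ R' > (0:ℝ), ∃ (m : ℕ) (c : Z → Fin m),
        ∀ x y : Z, x ≠ y → c x = c y → R' ≤ dist x y) :=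
  stmt8_general X R hR n hball
end

section
/- Every uniformly discrete metric space X with bounded geometry admits an atlas: for every R > 0 there exist a finite collection T_R of pairwise disjoint partial translations of X whose union contains the set {(x,y) ∈ X×X : d(x,y) < R}, and a collection Σ_R of partial cotranslations for T_R, such that there exists k ∈ ℕ with the property that for each pair x, x' ∈ X at most k elements σ ∈ Σ_R satisfy σx = x', and such that for every t ∈ T_R and all (x,y), (x',y') ∈ t there exists σ ∈ Σ_R with σx = x' and σy = y'. -/
open Metric

/-- A partial bijection of `X`: a subset of `X × X` both of whose coordinate
projections are injective. -/
def IsPartialBijection {X : Type*} (t : Set (X × X)) : Prop :=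
  ∀ p ∈ t, ∀ q ∈ t, (p.1 = q.1 → p = q) ∧ (p.2 = q.2 → p = q)

/-- A partial translation of `X`: a partial bijection moving points a uniformly
bounded distance. -/
def IsPartialTranslation {X : Type*} [MetricSpace X] (t : Set (X × X)) : Prop :=
  IsPartialBijection t ∧ ∃ B : ℝ, ∀ p ∈ t, dist p.1 p.2 ≤ B

/-- `σ` is a partial cotranslation for the family `T` of partial translations:
`σ` is a partial bijection, and whenever `(x,y) ∈ t ∈ T` and `σ` is defined at
both `x` and `y`, then `(σ x, σ y) ∈ t`.  Here `(x, x') ∈ σ` means `σ x = x'`. -/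
def IsPartialCotranslationFor {X : Type*} [MetricSpace X]
    (T : Set (Set (X × X))) (σ : Set (X × X)) : Prop :=
  IsPartialBijection σ ∧
    ∀ t ∈ T, ∀ x y x' y' : X, (x, y) ∈ t → (x, x') ∈ σ → (y, y') ∈ σ → (x', y') ∈ t

/-- `(T, Sig)` is an atlas chart at scale `R` with multiplicity bound `k`:
`T` is a finite set of pairwise disjoint partial translations whose union
contains the `R`-neighbourhood of the diagonal, `Sig` is a set of partial
cotranslations for `T`, at most `k` elements of `Sig` send `x` to `x'` for any
`x, x'`, and the elements of `Sig` act transitively on each `t ∈ T`. -/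
def IsAtlasAt {X : Type*} [MetricSpace X] (R : ℝ) (k : ℕ)
    (T : Set (Set (X × X))) (Sig : Set (Set (X × X))) : Prop :=
  T.Finite ∧
  (∀ t ∈ T, IsPartialTranslation t) ∧
  T.Pairwise Disjoint ∧
  (∀ x y : X, dist x y < R → ∃ t ∈ T, (x, y) ∈ t) ∧
  (∀ σ ∈ Sig, IsPartialCotranslationFor T σ) ∧
  (∀ x x' : X, {σ ∈ Sig | (x, x') ∈ σ}.Finite ∧ {σ ∈ Sig | (x, x') ∈ σ}.ncard ≤ k) ∧
  (∀ t ∈ T, ∀ x y x' y' : X, (x, y) ∈ t → (x', y') ∈ t →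
    ∃ σ ∈ Sig, (x, x') ∈ σ ∧ (y, y') ∈ σ)

/-- The cotranslation orbit of the pair `(x, y)` under `Sig`. -/
def cotranslationOrbit {X : Type*} (Sig : Set (Set (X × X))) (x y : X) :
    Set (X × X) :=
  {p : X × X | ∃ σ ∈ Sig, (x, p.1) ∈ σ ∧ (y, p.2) ∈ σ}

/-- An atlas chart is globally controlled if every cotranslation orbit is a
partial translation. -/
def IsGloballyControlledAt {X : Type*} [MetricSpace X]
    (Sig : Set (Set (X × X))) : Prop :=
  ∀ x y : X, IsPartialTranslation (cotranslationOrbit Sig x y)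

/-!
Bounded geometry lets every point `x` label the points of its `R`-ball injectively by numbers
`≤ N`, with `x` itself labelled `0`. Sorting the pairs `(x, y)` with `d(x, y) < R` by the pair
(label of `y` seen from `x`, label of `x` seen from `y`) cuts the `R`-neighbourhood of the
diagonal into finitely many disjoint partial translations; the cell `(0, 0)` is the diagonal and
the transpose of a cell is a cell. As cotranslations take the two-point maps `x ↦ x', y ↦ y'`
with `(x, y)` and `(x', y')` in a common cell. Disjointness, the diagonal cell and
transpose-closure make them cotranslations, and such a map sending `x` to `x'` is determined by
a cell, so at most as many of them as there are cells do so.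
-/

open Set

section PairMaps

variable {X : Type*}

def pairMaps (T : Set (Set (X × X))) : Set (Set (X × X)) :=
  {σ | ∃ s ∈ T, ∃ p ∈ s, ∃ q ∈ s, σ = {(p.1, q.1), (p.2, q.2)}}

lemma isPartialBijection_pair {a a' b b' : X} (h : a = b ↔ a' = b') :
    IsPartialBijection ({(a, a'), (b, b')} : Set (X × X)) := by
  rintro p (rfl | rfl) q (rfl | rfl) <;> simp_all [eq_comm]

lemma IsPartialBijection.pair_eq_insert {s : Set (X × X)} (hs : IsPartialBijection s)
    {a a' b b' : X} (hb : (a, b) ∈ s) (hb' : (a', b') ∈ s) :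
    ({(a, a'), (b, b')} : Set (X × X)) = insert (a, a') {q | (a, q.1) ∈ s ∧ (a', q.2) ∈ s} := by
  congr 1
  ext ⟨c, c'⟩
  refine ⟨?_, fun ⟨hc, hc'⟩ => ?_⟩
  · rintro ⟨⟩
    exact ⟨hb, hb'⟩
  · simp only [mem_singleton_iff, Prod.mk.injEq]
    exact ⟨(congrArg Prod.snd ((hs _ hb _ hc).1 rfl)).symm,
      (congrArg Prod.snd ((hs _ hb' _ hc').1 rfl)).symm⟩

variable {T : Set (Set (X × X))}

lemma eq_of_mem_of_mem_of_pairwise_disjoint (hT : T.Pairwise Disjoint) {s s' : Set (X × X)}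
    (hs : s ∈ T) (hs' : s' ∈ T) {p : X × X} (hp : p ∈ s) (hp' : p ∈ s') : s = s' := by
  by_contra h
  exact disjoint_left.mp (hT hs hs' h) hp hp'

lemma eq_diagonal_of_mem (hT : T.Pairwise Disjoint) (hdiag : diagonal X ∈ T) {s : Set (X × X)}
    (hs : s ∈ T) {a : X} (ha : (a, a) ∈ s) : s = diagonal X :=
  eq_of_mem_of_mem_of_pairwise_disjoint hT hs hdiag ha (mem_diagonal a)

lemma eq_iff_eq_of_mem_of_mem (hT : T.Pairwise Disjoint) (hdiag : diagonal X ∈ T)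
    {s : Set (X × X)} (hs : s ∈ T) {a b a' b' : X} (hp : (a, b) ∈ s) (hq : (a', b') ∈ s) :
    a = b ↔ a' = b' := by
  constructor <;> rintro rfl
  · exact mem_diagonal_iff.mp (eq_diagonal_of_mem hT hdiag hs hp ▸ hq)
  · exact mem_diagonal_iff.mp (eq_diagonal_of_mem hT hdiag hs hq ▸ hp)

lemma setOf_mem_pairMaps_subset_image (hbij : ∀ s ∈ T, IsPartialBijection s)
    (hswap : ∀ s ∈ T, Prod.swap ⁻¹' s ∈ T) (x x' : X) :
    {σ ∈ pairMaps T | (x, x') ∈ σ} ⊆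
      (fun s => insert (x, x') {q | (x, q.1) ∈ s ∧ (x', q.2) ∈ s}) '' T := by
  rintro σ ⟨⟨s, hs, ⟨a, b⟩, hp, ⟨a', b'⟩, hq, rfl⟩, hx⟩
  simp only [mem_insert_iff, mem_singleton_iff, Prod.mk.injEq] at hx
  obtain ⟨rfl, rfl⟩ | ⟨rfl, rfl⟩ := hx
  · exact ⟨s, hs, ((hbij s hs).pair_eq_insert hp hq).symm⟩
  · refine ⟨Prod.swap ⁻¹' s, hswap s hs, ?_⟩
    rw [pair_comm]
    exact ((hbij _ (hswap s hs)).pair_eq_insert (b := a) hp hq).symm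

variable [MetricSpace X]

lemma isPartialCotranslationFor_of_mem_pairMaps (hT : T.Pairwise Disjoint)
    (hdiag : diagonal X ∈ T) (hswap : ∀ s ∈ T, Prod.swap ⁻¹' s ∈ T) {σ : Set (X × X)}
    (hσ : σ ∈ pairMaps T) : IsPartialCotranslationFor T σ := by
  obtain ⟨s, hs, ⟨a, b⟩, hp, ⟨a', b'⟩, hq, rfl⟩ := hσ
  refine ⟨isPartialBijection_pair (eq_iff_eq_of_mem_of_mem hT hdiag hs hp hq), ?_⟩
  intro t ht u v u' v' huv hu hv
  simp only [mem_insert_iff, mem_singleton_iff, Prod.mk.injEq] at hu hv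
  obtain ⟨rfl, rfl⟩ | ⟨rfl, rfl⟩ := hu <;> obtain ⟨rfl, rfl⟩ | ⟨rfl, rfl⟩ := hv
  · exact (eq_diagonal_of_mem hT hdiag ht huv).symm ▸ mem_diagonal _
  · exact eq_of_mem_of_mem_of_pairwise_disjoint hT hs ht hp huv ▸ hq
  · exact eq_of_mem_of_mem_of_pairwise_disjoint hT (hswap s hs) ht hp huv ▸
      show _ ∈ Prod.swap ⁻¹' s from hq
  · exact (eq_diagonal_of_mem hT hdiag ht huv).symm ▸ mem_diagonal _

theorem isAtlasAt_pairMaps {R : ℝ} (hfin : T.Finite) (htrans : ∀ s ∈ T, IsPartialTranslation s)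
    (hT : T.Pairwise Disjoint) (hdiag : diagonal X ∈ T) (hswap : ∀ s ∈ T, Prod.swap ⁻¹' s ∈ T)
    (hcover : ∀ x y : X, dist x y < R → ∃ s ∈ T, (x, y) ∈ s) :
    IsAtlasAt R T.ncard T (pairMaps T) := by
  have hbij : ∀ s ∈ T, IsPartialBijection s := fun s hs => (htrans s hs).1
  refine ⟨hfin, htrans, hT, hcover, fun σ hσ => isPartialCotranslationFor_of_mem_pairMaps hT hdiag
    hswap hσ, fun x x' => ?_, fun s hs x y x' y' hp hq => ⟨_, ⟨s, hs, _, hp, _, hq, rfl⟩, by simp⟩⟩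
  have hsub := setOf_mem_pairMaps_subset_image hbij hswap x x'
  exact ⟨(hfin.image _).subset hsub,
    (ncard_le_ncard hsub (hfin.image _)).trans (ncard_image_le hfin)⟩

end PairMaps

lemma Set.Finite.exists_injOn_Iio_of_ncard_le {α : Type*} {s : Set α} (hs : s.Finite) {N : ℕ}
    (hN : s.ncard ≤ N) {a : α} (ha : a ∈ s) :
    ∃ g : α → ℕ, InjOn g s ∧ MapsTo g s (Iio N) ∧ g a = 0 := by
  obtain ⟨g, hmaps, hinj⟩ := hs.exists_injOn_of_encard_le (t := Iio N) (by
    rw [← hs.cast_ncard_eq, ← (finite_Iio N).cast_ncard_eq, ncard_Iio_nat]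
    exact_mod_cast hN)
  have hN0 : 0 < N := (Nat.zero_le _).trans_lt (hmaps ha)
  refine ⟨Equiv.swap (g a) 0 ∘ g, (Equiv.injective _).comp_injOn hinj, fun y hy => ?_,
    Equiv.swap_apply_left _ _⟩
  simp only [Function.comp_apply, Equiv.swap_apply_def]
  split_ifs
  exacts [hN0, hmaps ha, hmaps hy]

section Labelling

variable {X : Type*} [MetricSpace X]

theorem BoundedGeometry.exists_labelling (hbg : BoundedGeometry X) {R : ℝ} (hR : 0 < R) :
    ∃ (N : ℕ) (f : X → X → ℕ), (∀ x, InjOn (f x) (ball x R)) ∧ (∀ x, f x x = 0) ∧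
      ∀ x y, dist x y < R → f x y < N := by
  obtain ⟨N, hN⟩ := hbg R hR
  have : ∀ x, ∃ g : X → ℕ, InjOn g (ball x R) ∧ MapsTo g (ball x R) (Iio N) ∧ g x = 0 :=
    fun x => ((hN x).1.subset ball_subset_closedBall).exists_injOn_Iio_of_ncard_le
      ((ncard_le_ncard ball_subset_closedBall (hN x).1).trans (hN x).2) (mem_ball_self hR)
  choose f hinj hmaps hzero using this
  exact ⟨N, f, hinj, hzero, fun x y h => hmaps x (mem_ball'.2 h)⟩

def labelCell (R : ℝ) (f : X → X → ℕ) (i j : ℕ) : Set (X × X) :=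
  {p | dist p.1 p.2 < R ∧ f p.1 p.2 = i ∧ f p.2 p.1 = j}

variable {R : ℝ} {f : X → X → ℕ}

lemma preimage_swap_labelCell (i j : ℕ) :
    Prod.swap ⁻¹' labelCell R f i j = labelCell R f j i := by
  ext ⟨x, y⟩
  simp only [labelCell, mem_preimage, Prod.fst_swap, Prod.snd_swap, mem_ofPred_eq, dist_comm x y]
  tauto

lemma isPartialTranslation_labelCell (hf : ∀ x, InjOn (f x) (ball x R)) (i j : ℕ) :
    IsPartialTranslation (labelCell R f i j) := by
  refine ⟨?_, R, fun p hp => hp.1.le⟩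
  rintro ⟨x, y⟩ ⟨hxy, hi, hj⟩ ⟨x', y'⟩ ⟨hxy', hi', hj'⟩
  dsimp only at *
  constructor <;> rintro (rfl : _ = _)
  · rw [hf x (mem_ball'.2 hxy) (mem_ball'.2 hxy') (hi.trans hi'.symm)]
  · rw [hf y (mem_ball.2 hxy) (mem_ball.2 hxy') (hj.trans hj'.symm)]

lemma disjoint_labelCell {i j i' j' : ℕ} (h : (i, j) ≠ (i', j')) :
    Disjoint (labelCell R f i j) (labelCell R f i' j') :=
  disjoint_left.2 fun _ ⟨_, hi, hj⟩ ⟨_, hi', hj'⟩ => h (by rw [← hi, ← hj, hi', hj'])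

lemma labelCell_zero_zero (hR : 0 < R) (hf : ∀ x, InjOn (f x) (ball x R))
    (hf0 : ∀ x, f x x = 0) : labelCell R f 0 0 = diagonal X := by
  ext ⟨x, y⟩
  refine ⟨fun ⟨hxy, hi, _⟩ => (hf x (mem_ball_self hR) (mem_ball'.2 hxy) (hf0 x ▸ hi.symm)), ?_⟩
  rintro (rfl : x = y)
  exact ⟨by simpa using hR, hf0 x, hf0 x⟩

-- `Iic N` rather than `Iio N`, so that the diagonal cell `(0, 0)` is indexed even for empty `X`.
def labelCells (R : ℝ) (f : X → X → ℕ) (N : ℕ) : Set (Set (X × X)) :=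
  (fun ij : ℕ × ℕ => labelCell R f ij.1 ij.2) '' (Iic N ×ˢ Iic N)

theorem isAtlasAt_labelCells (hR : 0 < R) (hf : ∀ x, InjOn (f x) (ball x R))
    (hf0 : ∀ x, f x x = 0) {N : ℕ} (hle : ∀ x y, dist x y < R → f x y ≤ N) :
    IsAtlasAt R (labelCells R f N).ncard (labelCells R f N) (pairMaps (labelCells R f N)) := by
  apply isAtlasAt_pairMaps
  · exact ((finite_Iic N).prod (finite_Iic N)).image _
  · rintro _ ⟨ij, -, rfl⟩
    exact isPartialTranslation_labelCell hf _ _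
  · exact Pairwise.image fun ij _ ij' _ h => disjoint_labelCell h
  · exact ⟨(0, 0), ⟨Nat.zero_le N, Nat.zero_le N⟩, labelCell_zero_zero hR hf hf0⟩
  · rintro _ ⟨⟨i, j⟩, ⟨hi, hj⟩, rfl⟩
    exact ⟨(j, i), ⟨hj, hi⟩, (preimage_swap_labelCell i j).symm⟩
  · intro x y h
    exact ⟨_, ⟨(f x y, f y x), ⟨hle x y h, hle y x (dist_comm x y ▸ h)⟩, rfl⟩, h, rfl, rfl⟩

end Labelling

theorem stmt9_general (X : Type) [MetricSpace X]
    (hbg : BoundedGeometry X) :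
    ∀ R > (0:ℝ), ∃ (k : ℕ) (T Sig : Set (Set (X × X))), IsAtlasAt R k T Sig := by
  intro R hR
  obtain ⟨N, f, hinj, hzero, hlt⟩ := hbg.exists_labelling hR
  exact ⟨_, _, _, isAtlasAt_labelCells hR hinj hzero fun x y h => (hlt x y h).le⟩

theorem stmt9 (X : Type) [MetricSpace X]
    (hud : UniformlyDiscrete X) (hbg : BoundedGeometry X) :
    ∀ R > (0:ℝ), ∃ (k : ℕ) (T Sig : Set (Set (X × X))), IsAtlasAt R k T Sig :=
  stmt9_general X hbg
end

section
/- Let X be a metric space admitting an injective uniform embedding into a countable discrete group G equipped with a proper left-invariant metric. Then X admits a free and globally controlled atlas; in particular κ_X(R) = 1 for all R > 0. -/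
open Metric

def IsUniformEmbeddingMap {X Y : Type*} [MetricSpace X] [MetricSpace Y]
    (f : X → Y) : Prop :=
  (∀ R > (0:ℝ), ∃ S > (0:ℝ), ∀ x y : X, dist x y ≤ R → dist (f x) (f y) ≤ S) ∧
  (∀ R > (0:ℝ), ∃ S > (0:ℝ), ∀ x y : X, dist (f x) (f y) ≤ R → dist x y ≤ S)

/-!
Transport the group structure along `φ`. The finitely many right translations
`φ y = φ x * g` with `g` in a ball form the partial translations, and the left
translations `φ y = h * φ x`, which commute with them, are the cotranslations.
A left translation is determined by the image of a single point, which gives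
multiplicity one, and the orbit of `(x, y)` under all left translations is
exactly the right translation by `(φ x)⁻¹ * φ y`, which gives global control
and transitivity at once.
-/

open Set Function

lemma isPartialBijection_setOf_eq_comp {X Y : Type*} {φ : X → Y} {f : Y → Y}
    (hφ : Injective φ) (hf : Injective f) :
    IsPartialBijection {p : X × X | φ p.2 = f (φ p.1)} := by
  rintro ⟨a, b⟩ (hab : φ b = f (φ a)) ⟨c, d⟩ (hcd : φ d = f (φ c))
  constructor
  · rintro (rfl : a = c)
    rw [hφ (hab.trans hcd.symm)]
  · rintro (rfl : b = d)
    rw [hφ (hf (hab.symm.trans hcd))]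

lemma dist_one_inv_mul {G : Type*} [Group G] [MetricSpace G]
    (hinv : ∀ g x y : G, dist (g * x) (g * y) = dist x y) (a b : G) :
    dist 1 (a⁻¹ * b) = dist a b := by
  simpa using (hinv a 1 (a⁻¹ * b)).symm

section Transport

variable {X G : Type*} [Group G] (φ : X → G)

def mulRightRel (g : G) : Set (X × X) := {p | φ p.2 = φ p.1 * g}

def mulLeftRel (h : G) : Set (X × X) := {p | φ p.2 = h * φ p.1}

variable {φ}

@[simp]
lemma mem_mulRightRel_iff {g : G} {x y : X} :
    (x, y) ∈ mulRightRel φ g ↔ (φ x)⁻¹ * φ y = g := by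
  rw [inv_mul_eq_iff_eq_mul]
  rfl

lemma disjoint_mulRightRel {g g' : G} (hne : g ≠ g') :
    Disjoint (mulRightRel φ g) (mulRightRel φ g') := by
  refine disjoint_left.2 fun ⟨x, y⟩ hg hg' => hne ?_
  rw [mem_mulRightRel_iff] at hg hg'
  rw [← hg, hg']

lemma cotranslationOrbit_range_mulLeftRel (x y : X) :
    cotranslationOrbit (range (mulLeftRel φ)) x y = mulRightRel φ ((φ x)⁻¹ * φ y) := by
  ext ⟨a, b⟩
  constructor
  · rintro ⟨_, ⟨h, rfl⟩, (ha : φ a = h * φ x), (hb : φ b = h * φ y)⟩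
    rw [mem_mulRightRel_iff, ha, hb]
    group
  · intro hab
    rw [mem_mulRightRel_iff] at hab
    refine ⟨_, ⟨φ a * (φ x)⁻¹, rfl⟩, ?_, ?_⟩
    · show φ a = φ a * (φ x)⁻¹ * φ x
      group
    · show φ b = φ a * (φ x)⁻¹ * φ y
      rw [mul_assoc, ← hab]
      group

lemma subsingleton_mulLeftRel_mem (x x' : X) :
    {σ ∈ range (mulLeftRel φ) | (x, x') ∈ σ}.Subsingleton := by
  rintro _ ⟨⟨h, rfl⟩, (hh : φ x' = h * φ x)⟩ _ ⟨⟨h', rfl⟩, (hh' : φ x' = h' * φ x)⟩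
  rw [mul_right_cancel (hh.symm.trans hh')]

variable [MetricSpace X]

lemma isPartialCotranslationFor_mulLeftRel (hφ : Injective φ)
    {T : Set (Set (X × X))} (hT : T ⊆ range (mulRightRel φ)) (h : G) :
    IsPartialCotranslationFor T (mulLeftRel φ h) := by
  refine ⟨isPartialBijection_setOf_eq_comp hφ (mul_right_injective h), ?_⟩
  rintro t ht x y x' y' hxy (hx : φ x' = h * φ x) (hy : φ y' = h * φ y)
  obtain ⟨g, rfl⟩ := hT ht
  rw [mem_mulRightRel_iff] at hxy ⊢
  rw [← hxy, hx, hy]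
  group

lemma isPartialTranslation_mulRightRel [MetricSpace G]
    (hinv : ∀ g x y : G, dist (g * x) (g * y) = dist x y) (hφ : Injective φ)
    (hφ_coarse : ∀ R > (0:ℝ), ∃ S > (0:ℝ), ∀ x y : X, dist (φ x) (φ y) ≤ R → dist x y ≤ S)
    (g : G) : IsPartialTranslation (mulRightRel φ g) := by
  refine ⟨isPartialBijection_setOf_eq_comp hφ (mul_left_injective g), ?_⟩
  obtain ⟨S, -, hS⟩ := hφ_coarse (dist 1 g + 1) (by positivity)
  refine ⟨S, fun ⟨x, y⟩ hxy => hS x y ?_⟩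
  rw [mem_mulRightRel_iff] at hxy
  rw [← dist_one_inv_mul hinv, hxy]
  linarith

end Transport

theorem stmt11_general (X : Type) [MetricSpace X]
    (G : Type) [Group G] [MetricSpace G]
    (hinv : ∀ g x y : G, dist (g * x) (g * y) = dist x y)
    (hproper : ∀ (x : G) (r : ℝ), (closedBall x r).Finite)
    (φ : X → G) (hinj : Function.Injective φ)
    (hue : IsUniformEmbeddingMap φ) :
    ∀ R > (0:ℝ), ∃ T Sig : Set (Set (X × X)),
      IsAtlasAt R 1 T Sig ∧ IsGloballyControlledAt Sig := by
  intro R hR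
  obtain ⟨S, -, hS⟩ := hue.1 R hR
  have hT : ∀ t ∈ mulRightRel φ '' closedBall 1 S, IsPartialTranslation t := by
    rintro _ ⟨g, -, rfl⟩
    exact isPartialTranslation_mulRightRel hinv hinj hue.2 g
  refine ⟨mulRightRel φ '' closedBall 1 S, range (mulLeftRel φ),
    ⟨(hproper 1 S).image _, hT, ?_, ?_, ?_, ?_, ?_⟩, ?_⟩
  · rintro _ ⟨g, -, rfl⟩ _ ⟨g', -, rfl⟩ hne
    exact disjoint_mulRightRel (ne_of_apply_ne _ hne)
  · intro x y hxy
    refine ⟨_, ⟨(φ x)⁻¹ * φ y, ?_, rfl⟩, mem_mulRightRel_iff.2 rfl⟩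
    rw [mem_closedBall, dist_comm, dist_one_inv_mul hinv]
    exact hS x y hxy.le
  · rintro _ ⟨h, rfl⟩
    exact isPartialCotranslationFor_mulLeftRel hinj (image_subset_range _ _) h
  · intro x x'
    have hsub := subsingleton_mulLeftRel_mem (φ := φ) x x'
    exact ⟨hsub.finite, (ncard_le_one hsub.finite).2 hsub⟩
  · rintro _ ⟨g, -, rfl⟩ x y x' y' hxy hx'y'
    change (x', y') ∈ cotranslationOrbit _ x y
    rwa [cotranslationOrbit_range_mulLeftRel, (mem_mulRightRel_iff.1 hxy)]
  · intro x y
    rw [cotranslationOrbit_range_mulLeftRel]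
    exact isPartialTranslation_mulRightRel hinv hinj hue.2 _

theorem stmt11 (X : Type) [MetricSpace X]
    (G : Type) [Group G] [Countable G] [MetricSpace G]
    (hinv : ∀ g x y : G, dist (g * x) (g * y) = dist x y)
    (hproper : ∀ (x : G) (r : ℝ), (closedBall x r).Finite)
    (φ : X → G) (hinj : Function.Injective φ)
    (hue : IsUniformEmbeddingMap φ) :
    ∀ R > (0:ℝ), ∃ T Sig : Set (Set (X × X)),
      IsAtlasAt R 1 T Sig ∧ IsGloballyControlledAt Sig :=
  stmt11_general X G hinv hproper φ hinj hue
end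

section
/- Let X be a uniformly discrete metric space with bounded geometry such that κ_X(R) > 1 for some R > 0; that is, for some R > 0 there exists no pair (T_R, Σ_R) of a finite set of pairwise disjoint partial translations covering {(x,y) : d(x,y) < R} together with partial cotranslations satisfying the atlas axioms with k = 1. Then X does not admit an injective uniform embedding into any countable discrete group equipped with a proper left-invariant metric. -/
/-!
An injective uniform embedding `φ : X → G` produces an atlas with `k = 1` at every scale `R`.
Pull back along `φ` the right multiplications by the elements `g` of a ball in `G` large enough
to contain every `(φ x)⁻¹ * φ y` with `d(x, y) < R` (finitely many, since balls of `G` are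
finite): these are disjoint partial translations covering the `R`-neighbourhood of the
diagonal. As cotranslations take the pullbacks of all left multiplications: they commute with
right multiplications, act transitively on each translation, and a left multiplication is
determined by the image of a single point.
-/

open Metric

open Function

section PullbackGraph

variable {X G : Type*}

def pullbackGraph (φ : X → G) (f : G → G) : Set (X × X) :=
  {p | φ p.2 = f (φ p.1)}

@[simp]
lemma mem_pullbackGraph {φ : X → G} {f : G → G} {p : X × X} :
    p ∈ pullbackGraph φ f ↔ φ p.2 = f (φ p.1) :=
  Iff.rfl

lemma isPartialBijection_pullbackGraph {φ : X → G} {f : G → G} (hφ : Injective φ)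
    (hf : Injective f) : IsPartialBijection (pullbackGraph φ f) := by
  rintro ⟨x, y⟩ hp ⟨x', y'⟩ hq
  simp only [mem_pullbackGraph] at hp hq
  refine ⟨fun hx : x = x' => ?_, fun hy : y = y' => ?_⟩
  · subst hx
    rw [hφ (hp.trans hq.symm)]
  · subst hy
    rw [hφ (hf (hp.symm.trans hq))]

variable [Group G] {φ : X → G}

lemma disjoint_pullbackGraph_mulRight {g g' : G} (hne : g ≠ g') :
    Disjoint (pullbackGraph φ (· * g)) (pullbackGraph φ (· * g')) :=
  Set.disjoint_left.mpr fun _ hp hp' => hne (mul_left_cancel (hp.symm.trans hp'))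

lemma subsingleton_pullbackGraph_mulLeft_mem (x x' : X) :
    {σ ∈ Set.range (fun h : G => pullbackGraph φ (h * ·)) | (x, x') ∈ σ}.Subsingleton := by
  rintro _ ⟨⟨h, rfl⟩, hx⟩ _ ⟨⟨h', rfl⟩, hx'⟩
  rw [mul_right_cancel (hx.symm.trans hx')]

lemma isPartialCotranslationFor_pullbackGraph_mulLeft [MetricSpace X] (hφ : Injective φ)
    {T : Set (Set (X × X))} (hT : T ⊆ Set.range (fun g : G => pullbackGraph φ (· * g)))
    (h : G) : IsPartialCotranslationFor T (pullbackGraph φ (h * ·)) := by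
  refine ⟨isPartialBijection_pullbackGraph hφ (mul_right_injective h), ?_⟩
  intro t ht x y x' y' hxy hx hy
  obtain ⟨g, rfl⟩ := hT ht
  simp only [mem_pullbackGraph] at hxy hx hy ⊢
  rw [hy, hx, hxy, mul_assoc]

lemma exists_pullbackGraph_mulLeft_of_mem_mulRight {g : G} {x y x' y' : X}
    (hxy : (x, y) ∈ pullbackGraph φ (· * g)) (hxy' : (x', y') ∈ pullbackGraph φ (· * g)) :
    ∃ σ ∈ Set.range (fun h : G => pullbackGraph φ (h * ·)), (x, x') ∈ σ ∧ (y, y') ∈ σ := by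
  simp only [mem_pullbackGraph] at hxy hxy'
  refine ⟨_, ⟨φ x' * (φ x)⁻¹, rfl⟩, ?_, ?_⟩ <;>
    simp only [mem_pullbackGraph, hxy, hxy', mul_assoc, inv_mul_cancel_left, inv_mul_cancel,
      mul_one]

variable [MetricSpace G] (hinv : ∀ g x y : G, dist (g * x) (g * y) = dist x y)
include hinv

lemma dist_mul_right_eq_dist_one (a g : G) : dist a (a * g) = dist 1 g := by
  simpa using hinv a 1 g

lemma isPartialTranslation_pullbackGraph_mulRight [MetricSpace X] (hφ : Injective φ)
    (hexp : ∀ R > (0:ℝ), ∃ S > (0:ℝ), ∀ x y : X, dist (φ x) (φ y) ≤ R → dist x y ≤ S)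
    (g : G) : IsPartialTranslation (pullbackGraph φ (· * g)) := by
  refine ⟨isPartialBijection_pullbackGraph hφ (mul_left_injective g), ?_⟩
  obtain ⟨B, -, hB⟩ := hexp (dist (1:G) g + 1) (by positivity)
  refine ⟨B, fun p hp => hB _ _ ?_⟩
  rw [mem_pullbackGraph.mp hp, dist_mul_right_eq_dist_one hinv]
  linarith

lemma exists_isAtlasAt_one_of_isUniformEmbeddingMap [MetricSpace X]
    (hfin : ∀ r : ℝ, (closedBall (1:G) r).Finite) (hφ : Injective φ)
    (hUE : IsUniformEmbeddingMap φ) {R : ℝ} (hR : 0 < R) :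
    ∃ T Sig : Set (Set (X × X)), IsAtlasAt R 1 T Sig := by
  obtain ⟨hctrl, hexp⟩ := hUE
  obtain ⟨S, -, hS⟩ := hctrl R hR
  set T := (fun g : G => pullbackGraph φ (· * g)) '' closedBall 1 S
  have hT : T ⊆ Set.range (fun g : G => pullbackGraph φ (· * g)) := Set.image_subset_range _ _
  refine ⟨T, Set.range (fun h : G => pullbackGraph φ (h * ·)), (hfin S).image _, ?_, ?_, ?_,
    ?_, fun x x' => ?_, ?_⟩
  · rintro _ ⟨g, -, rfl⟩
    exact isPartialTranslation_pullbackGraph_mulRight hinv hφ hexp g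
  · rintro _ ⟨g, -, rfl⟩ _ ⟨g', -, rfl⟩ hne
    exact disjoint_pullbackGraph_mulRight fun hg => hne (by rw [hg])
  · intro x y hxy
    refine ⟨_, ⟨(φ x)⁻¹ * φ y, ?_, rfl⟩, by simp⟩
    rw [mem_closedBall, dist_comm, ← dist_mul_right_eq_dist_one hinv (φ x), mul_inv_cancel_left]
    exact hS x y hxy.le
  · rintro _ ⟨h, rfl⟩
    exact isPartialCotranslationFor_pullbackGraph_mulLeft hφ hT h
  · have hsub := subsingleton_pullbackGraph_mulLeft_mem (φ := φ) x x'
    have := hsub.finite.to_subtype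
    exact ⟨hsub.finite, Set.ncard_le_one_iff_subsingleton.mpr hsub⟩
  · rintro _ ⟨g, -, rfl⟩ x y x' y' hxy hxy'
    exact exists_pullbackGraph_mulLeft_of_mem_mulRight hxy hxy'

end PullbackGraph

theorem stmt12_general (X : Type) [MetricSpace X]
    (h : ∃ R > (0:ℝ), ¬ ∃ T Sig : Set (Set (X × X)), IsAtlasAt R 1 T Sig) :
    ∀ (G : Type) [Group G] [Countable G] [MetricSpace G],
      (∀ g x y : G, dist (g * x) (g * y) = dist x y) →
      (∀ (x : G) (r : ℝ), (closedBall x r).Finite) →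
      ∀ φ : X → G, Function.Injective φ → ¬ IsUniformEmbeddingMap φ := by
  obtain ⟨R, hR, hno⟩ := h
  intro G _ _ _ hinv hfin φ hφ hUE
  exact hno (exists_isAtlasAt_one_of_isUniformEmbeddingMap hinv (hfin 1) hφ hUE hR)

theorem stmt12 (X : Type) [MetricSpace X]
    (hud : UniformlyDiscrete X) (hbg : BoundedGeometry X)
    (h : ∃ R > (0:ℝ), ¬ ∃ T Sig : Set (Set (X × X)), IsAtlasAt R 1 T Sig) :
    ∀ (G : Type) [Group G] [Countable G] [MetricSpace G],
      (∀ g x y : G, dist (g * x) (g * y) = dist x y) →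
      (∀ (x : G) (r : ℝ), (closedBall x r).Finite) →
      ∀ φ : X → G, Function.Injective φ → ¬ IsUniformEmbeddingMap φ :=
  stmt12_general X h
end

section
/- Let X be a uniformly discrete metric space with bounded geometry, let (X_i)_{i∈ℕ} be an enumeration of all finite subsets of X, and let Fin(X) denote the disjoint union ⨿_i X_i equipped with any metric whose restriction to each X_i agrees with the metric of X and such that for every R > 0 all but finitely many i satisfy d(X_i, Fin(X) ∖ X_i) > R. Then X has property A if and only if Fin(X) has property A. -/
open Metric

namespace PA

open Finsupp

variable {α : Type*} {β : Type*}

noncomputable def tot (f : α →₀ ℝ) : ℝ := ∑ y ∈ f.support, f y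
noncomputable def l1 (f : α →₀ ℝ) : ℝ := ∑ y ∈ f.support, |f y|

lemma tot_eq_sum {f : α →₀ ℝ} {t : Finset α} (h : f.support ⊆ t) :
    tot f = ∑ y ∈ t, f y :=
  Finset.sum_subset h (fun _ _ hy => notMem_support_iff.mp hy)

lemma l1_eq_sum {f : α →₀ ℝ} {t : Finset α} (h : f.support ⊆ t) :
    l1 f = ∑ y ∈ t, |f y| :=
  Finset.sum_subset h (fun _ _ hy => by rw [notMem_support_iff.mp hy, abs_zero])

lemma l1_nonneg (f : α →₀ ℝ) : 0 ≤ l1 f := Finset.sum_nonneg fun _ _ => abs_nonneg _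

lemma tot_add (f g : α →₀ ℝ) : tot (f + g) = tot f + tot g := by
  classical
  rw [tot_eq_sum (t := f.support ∪ g.support) Finsupp.support_add,
    tot_eq_sum (t := f.support ∪ g.support) Finset.subset_union_left,
    tot_eq_sum (t := f.support ∪ g.support) Finset.subset_union_right,
    ← Finset.sum_add_distrib]
  simp

lemma l1_add_le (f g : α →₀ ℝ) : l1 (f + g) ≤ l1 f + l1 g := by
  classical
  rw [l1_eq_sum (t := f.support ∪ g.support) Finsupp.support_add,
    l1_eq_sum (t := f.support ∪ g.support) Finset.subset_union_left,
    l1_eq_sum (t := f.support ∪ g.support) Finset.subset_union_right,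
    ← Finset.sum_add_distrib]
  refine Finset.sum_le_sum fun y _ => ?_
  simpa using abs_add_le (f y) (g y)

lemma l1_neg (f : α →₀ ℝ) : l1 (-f) = l1 f := by
  rw [l1_eq_sum (t := f.support) (by simp), l1]
  refine Finset.sum_congr rfl fun y _ => ?_
  simp

lemma tot_smul (c : ℝ) (f : α →₀ ℝ) : tot (c • f) = c * tot f := by
  rw [tot_eq_sum (t := f.support) Finsupp.support_smul, tot, Finset.mul_sum]
  simp

lemma l1_smul (c : ℝ) (f : α →₀ ℝ) : l1 (c • f) = |c| * l1 f := by
  rw [l1_eq_sum (t := f.support) Finsupp.support_smul, l1, Finset.mul_sum]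
  refine Finset.sum_congr rfl fun y _ => ?_
  simp [abs_mul]

lemma tot_single (a : α) (r : ℝ) : tot (single a r) = r := by
  rcases eq_or_ne r 0 with h | h
  · simp [h, tot]
  · rw [tot, support_single_ne_zero a h]
    simp

lemma l1_single_le (a : α) (r : ℝ) : l1 (single a r) ≤ |r| := by
  rcases eq_or_ne r 0 with h | h
  · simp [h, l1]
  · rw [l1, support_single_ne_zero a h]
    simp

lemma tot_sum {ι : Type*} (s : Finset ι) (F : ι → α →₀ ℝ) :
    tot (∑ i ∈ s, F i) = ∑ i ∈ s, tot (F i) := by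
  classical
  induction s using Finset.induction with
  | empty => simp [tot]
  | insert _ _ h ih =>
    rw [Finset.sum_insert h, Finset.sum_insert h, tot_add, ih]

lemma l1_sum_le {ι : Type*} (s : Finset ι) (F : ι → α →₀ ℝ) :
    l1 (∑ i ∈ s, F i) ≤ ∑ i ∈ s, l1 (F i) := by
  classical
  induction s using Finset.induction with
  | empty => simp [l1]
  | insert _ _ h ih =>
    rw [Finset.sum_insert h, Finset.sum_insert h]
    exact le_trans (l1_add_le _ _) (by linarith)

lemma l1_of_nonneg {f : α →₀ ℝ} (h : ∀ y, 0 ≤ f y) : l1 f = tot f :=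
  Finset.sum_congr rfl fun y _ => abs_of_nonneg (h y)

lemma apply_le_tot {f : α →₀ ℝ} (h : ∀ y, 0 ≤ f y) (x : α) : f x ≤ tot f := by
  by_cases hx : x ∈ f.support
  · exact Finset.single_le_sum (fun y _ => h y) hx
  · rw [notMem_support_iff.mp hx]
    exact Finset.sum_nonneg fun y _ => h y

lemma mapDomain_nonneg {g : α → β} {f : α →₀ ℝ} (h : ∀ y, 0 ≤ f y) (z : β) :
    0 ≤ mapDomain g f z := by
  classical
  rw [mapDomain, Finsupp.sum_apply]
  refine Finset.sum_nonneg fun y _ => ?_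
  dsimp only
  rw [Finsupp.single_apply]
  split
  · exact h y
  · exact le_refl 0

lemma tot_mapDomain (g : α → β) (f : α →₀ ℝ) : tot (mapDomain g f) = tot f := by
  have h1 : tot (mapDomain g f) = (mapDomain g f).sum fun _ r => r := rfl
  have h2 : tot f = f.sum fun _ r => r := rfl
  rw [h1, h2, Finsupp.sum_mapDomain_index (fun _ => rfl) (fun _ _ _ => rfl)]

lemma l1_mapDomain_le (g : α → β) (f : α →₀ ℝ) : l1 (mapDomain g f) ≤ l1 f := by
  classical
  calc l1 (mapDomain g f) = l1 (∑ a ∈ f.support, single (g a) (f a)) := rfl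
    _ ≤ ∑ a ∈ f.support, l1 (single (g a) (f a)) := l1_sum_le _ _
    _ ≤ ∑ a ∈ f.support, |f a| := Finset.sum_le_sum fun a _ => l1_single_le _ _
    _ = l1 f := rfl

lemma mapDomain_sub (g : α → β) (a b : α →₀ ℝ) :
    mapDomain g (a - b) = mapDomain g a - mapDomain g b :=
  map_sub (Finsupp.mapDomain.addMonoidHom g) a b

lemma sumsingle_apply [DecidableEq α] (t : Finset α) (c : α → ℝ) (y : α) :
    (∑ w ∈ t, single w (c w)) y = if y ∈ t then c y else 0 := by
  rw [Finset.sum_apply']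
  simp_rw [Finsupp.single_apply]
  exact Finset.sum_ite_eq' t y c

lemma sumsingle_support [DecidableEq α] (t : Finset α) (c : α → ℝ) :
    (∑ w ∈ t, single w (c w)).support ⊆ t := by
  intro y hy
  rw [Finsupp.mem_support_iff, sumsingle_apply] at hy
  by_contra h
  rw [if_neg h] at hy
  exact hy rfl


noncomputable def colf (s : Finset (α × ℕ)) : α →₀ ℝ := ∑ p ∈ s, single p.1 1

lemma colf_nonneg (s : Finset (α × ℕ)) (y : α) : 0 ≤ colf s y := by
  classical
  rw [colf, Finset.sum_apply']
  refine Finset.sum_nonneg fun p _ => ?_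
  rw [Finsupp.single_apply]
  split <;> norm_num

lemma tot_colf (s : Finset (α × ℕ)) : tot (colf s) = s.card := by
  rw [colf, tot_sum]
  simp [tot_single]

lemma l1_colf (s : Finset (α × ℕ)) : l1 (colf s) = s.card := by
  rw [l1_of_nonneg (colf_nonneg s), tot_colf]

lemma support_colf (s : Finset (α × ℕ)) {y : α} (hy : colf s y ≠ 0) :
    ∃ p ∈ s, p.1 = y := by
  classical
  have h := Finsupp.support_finset_sum (Finsupp.mem_support_iff.mpr hy)
  rw [Finset.mem_biUnion] at h
  obtain ⟨p, hp, hy2⟩ := h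
  exact ⟨p, hp, (Finset.mem_singleton.mp (Finsupp.support_single_subset hy2)).symm⟩

lemma colf_split (s t : Finset (α × ℕ)) [DecidableEq (α × ℕ)] :
    colf s = colf (s \ t) + colf (s ∩ t) := by
  rw [colf, colf, colf, ← Finset.sum_union (Finset.disjoint_sdiff_inter s t),
    Finset.sdiff_union_inter]

lemma ncard_symmDiff {A B : Set α} (hA : A.Finite) (hB : B.Finite) :
    (symmDiff A B).ncard = (A \ B).ncard + (B \ A).ncard := by
  rw [Set.symmDiff_def]
  exact Set.ncard_union_eq disjoint_sdiff_sdiff hA.diff hB.diff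

lemma card_toFinset_sdiff {A B : Set α} (hA : A.Finite) (hB : B.Finite)
    [DecidableEq α] :
    (hA.toFinset \ hB.toFinset).card = (A \ B).ncard := by
  rw [← Set.ncard_coe_finset]
  congr 1
  simp [Set.Finite.coe_toFinset]

lemma ncard_le_add_symmDiff {A B : Set α} (hB : B.Finite)
    (hΔ : (symmDiff A B).Finite) : A.ncard ≤ B.ncard + (symmDiff A B).ncard := by
  have hsub : A ⊆ B ∪ symmDiff A B := by
    intro z hz
    by_cases h : z ∈ B
    · exact Or.inl h
    · exact Or.inr (by rw [Set.mem_symmDiff]; exact Or.inl ⟨hz, h⟩)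
  exact le_trans (Set.ncard_le_ncard hsub (hB.union hΔ)) (Set.ncard_union_le _ _)

/-- From a property-A family of sets, produce normalized finitely supported
functions. -/
lemma setsToFun {Z : Type*} [MetricSpace Z] {R ε S : ℝ}
    (A : Z → Set (Z × ℕ)) (h1 : ∀ x, (A x).Finite ∧ (A x).Nonempty)
    (h2 : ∀ x y : Z, dist x y < R →
      ((symmDiff (A x) (A y)).ncard : ℝ) < ε * ((A x ∩ A y).ncard : ℝ))
    (h3 : ∀ x : Z, ∀ p ∈ A x, dist x p.1 ≤ S) :
    ∃ φ : Z → Z →₀ ℝ,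
      (∀ x y, 0 ≤ φ x y) ∧ (∀ x, tot (φ x) = 1) ∧
      (∀ x y, φ x y ≠ 0 → dist x y ≤ S) ∧
      (∀ x y, dist x y < R → l1 (φ x - φ y) ≤ 2 * ε) := by
  classical
  set FA : Z → Finset (Z × ℕ) := fun x => (h1 x).1.toFinset with hFA
  set T : Z → ℝ := fun x => ((FA x).card : ℝ) with hT
  have hcard : ∀ x, ((FA x).card : ℝ) = ((A x).ncard : ℝ) := by
    intro x
    rw [← Set.ncard_coe_finset]
    congr 1
    simp [hFA]
  have hTpos : ∀ x, 0 < T x := by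
    intro x
    have : (FA x).Nonempty := by
      rw [hFA, Set.Finite.toFinset_nonempty]
      exact (h1 x).2
    show (0:ℝ) < ((FA x).card : ℝ)
    exact_mod_cast Finset.card_pos.mpr this
  set φ : Z → Z →₀ ℝ := fun x => (T x)⁻¹ • colf (FA x) with hφ
  have happly : ∀ x y, φ x y = (T x)⁻¹ * colf (FA x) y := by
    intro x y; rw [hφ]; simp
  refine ⟨φ, ?_, ?_, ?_, ?_⟩
  · intro x y
    rw [happly]
    exact mul_nonneg (inv_nonneg.mpr (le_of_lt (hTpos x))) (colf_nonneg _ _)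
  · intro x
    rw [hφ]
    simp only [tot_smul, tot_colf]
    exact inv_mul_cancel₀ (ne_of_gt (hTpos x))
  · intro x y hne
    rw [happly] at hne
    have : colf (FA x) y ≠ 0 := by
      intro h; rw [h, mul_zero] at hne; exact hne rfl
    obtain ⟨p, hp, hpy⟩ := support_colf _ this
    have hpA : p ∈ A x := by
      rw [hFA] at hp; rwa [Set.Finite.mem_toFinset] at hp
    rw [← hpy]
    exact h3 x p hpA
  · intro x y hxy
    have hΔfin : (symmDiff (A x) (A y)).Finite :=
      ((h1 x).1.union (h1 y).1).subset (Set.symmDiff_subset_union)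
    set nΔ : ℝ := ((symmDiff (A x) (A y)).ncard : ℝ) with hnΔ
    set nI : ℝ := ((A x ∩ A y).ncard : ℝ) with hnI
    have hkey := h2 x y hxy
    have hnΔ0 : 0 ≤ nΔ := by positivity
    have hεnI : 0 < ε * nI := lt_of_le_of_lt hnΔ0 hkey
    have hε : 0 < ε := by
      by_contra h
      push_neg at h
      have : ε * nI ≤ 0 := mul_nonpos_of_nonpos_of_nonneg h (by positivity)
      linarith
    -- key1 : l1 (colf FA x - colf FA y) ≤ nΔ
    have hsplit : colf (FA x) - colf (FA y)
        = colf (FA x \ FA y) - colf (FA y \ FA x) := by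
      rw [colf_split (FA x) (FA y), colf_split (FA y) (FA x),
        Finset.inter_comm (FA y) (FA x)]
      abel
    have key1 : l1 (colf (FA x) - colf (FA y)) ≤ nΔ := by
      rw [hsplit, sub_eq_add_neg]
      refine le_trans (l1_add_le _ _) ?_
      rw [l1_neg, l1_colf, l1_colf, hnΔ,
        ncard_symmDiff (h1 x).1 (h1 y).1,
        card_toFinset_sdiff (h1 x).1 (h1 y).1,
        card_toFinset_sdiff (h1 y).1 (h1 x).1]
      push_cast
      norm_num
    -- key2 : |T x - T y| <= nD
    have key2 : |T x - T y| ≤ nΔ := by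
      have hA := ncard_le_add_symmDiff (A := A x) (B := A y) (h1 y).1 hΔfin
      have hB := ncard_le_add_symmDiff (A := A y) (B := A x) (h1 x).1
        (by rwa [symmDiff_comm])
      rw [symmDiff_comm] at hB
      have hA' : ((A x).ncard : ℝ) ≤ ((A y).ncard : ℝ) + nΔ := by
        rw [hnΔ]; exact_mod_cast hA
      have hB' : ((A y).ncard : ℝ) ≤ ((A x).ncard : ℝ) + nΔ := by
        rw [hnΔ]; exact_mod_cast hB
      have hTx : T x = ((A x).ncard : ℝ) := hcard x
      have hTy : T y = ((A y).ncard : ℝ) := hcard y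
      rw [abs_sub_le_iff, hTx, hTy]
      constructor <;> linarith
    -- decomposition
    have hdecomp : φ x - φ y = (T x)⁻¹ • (colf (FA x) - colf (FA y))
        + ((T x)⁻¹ - (T y)⁻¹) • colf (FA y) := by
      rw [hφ]
      dsimp only
      rw [smul_sub, sub_smul]
      abel
    have hbound : l1 (φ x - φ y) ≤ (T x)⁻¹ * nΔ + |(T x)⁻¹ - (T y)⁻¹| * T y := by
      rw [hdecomp]
      refine le_trans (l1_add_le _ _) ?_
      rw [l1_smul, l1_smul, l1_colf]
      have h1' : |(T x)⁻¹| * l1 (colf (FA x) - colf (FA y)) ≤ (T x)⁻¹ * nΔ := by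
        rw [abs_of_pos (inv_pos.mpr (hTpos x))]
        exact mul_le_mul_of_nonneg_left key1 (le_of_lt (inv_pos.mpr (hTpos x)))
      have h2' : |(T x)⁻¹ - (T y)⁻¹| * ((FA y).card : ℝ)
          = |(T x)⁻¹ - (T y)⁻¹| * T y := rfl
      linarith [h1', le_of_eq h2']
    have hinv : |(T x)⁻¹ - (T y)⁻¹| * T y = |T y - T x| / T x := by
      have hx := hTpos x
      have hy := hTpos y
      rw [inv_sub_inv (ne_of_gt hx) (ne_of_gt hy), abs_div,
        abs_of_pos (mul_pos hx hy)]
      field_simp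
    have hIled : nI ≤ T x := by
      have h7 : nI ≤ ((A x).ncard : ℝ) := by
        rw [hnI]
        exact_mod_cast Set.ncard_le_ncard Set.inter_subset_left (h1 x).1
      exact le_trans h7 (le_of_eq (hcard x).symm)
    have habs : |T y - T x| ≤ nΔ := by rwa [abs_sub_comm]
    have hfin : (T x)⁻¹ * nΔ + |T y - T x| / T x ≤ 2 * ε := by
      have hx := hTpos x
      have h5 : (T x)⁻¹ * nΔ + |T y - T x| / T x ≤ (2 * nΔ) / T x := by
        rw [div_eq_inv_mul, div_eq_inv_mul]
        nlinarith [inv_pos.mpr hx, habs]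
      refine le_trans h5 ?_
      rw [div_le_iff₀ hx]
      have h6 := mul_le_mul_of_nonneg_left hIled (le_of_lt hε)
      nlinarith [hkey]
    calc l1 (φ x - φ y) ≤ (T x)⁻¹ * nΔ + |(T x)⁻¹ - (T y)⁻¹| * T y := hbound
      _ = (T x)⁻¹ * nΔ + |T y - T x| / T x := by rw [hinv]
      _ ≤ 2 * ε := hfin


def lowSet (μ : α → ℕ) : Set (α × ℕ) := {p | p.2 < μ p.1}

lemma lowSet_eq [DecidableEq α] (μ : α → ℕ) (t : Finset α)
    (h : ∀ y, μ y ≠ 0 → y ∈ t) :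
    lowSet μ = ↑(t.biUnion fun y => {y} ×ˢ Finset.range (μ y)) := by
  ext p
  simp only [lowSet, Set.mem_setOf_eq, Finset.coe_biUnion, Set.mem_iUnion,
    Finset.mem_coe, Finset.mem_product, Finset.mem_singleton, Finset.mem_range]
  constructor
  · intro hp
    exact ⟨p.1, h p.1 (by omega), rfl, hp⟩
  · rintro ⟨y, _, rfl, hp⟩
    exact hp

lemma lowSet_finite [DecidableEq α] (μ : α → ℕ) (t : Finset α)
    (h : ∀ y, μ y ≠ 0 → y ∈ t) : (lowSet μ).Finite := by
  rw [lowSet_eq μ t h]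
  exact Finset.finite_toSet _

lemma ncard_lowSet [DecidableEq α] (μ : α → ℕ) (t : Finset α)
    (h : ∀ y, μ y ≠ 0 → y ∈ t) :
    (lowSet μ).ncard = ∑ y ∈ t, μ y := by
  rw [lowSet_eq μ t h, Set.ncard_coe_finset, Finset.card_biUnion]
  · refine Finset.sum_congr rfl fun y _ => ?_
    rw [Finset.card_product]
    simp
  · intro a _ b _ hab
    rw [Function.onFun, Finset.disjoint_left]
    rintro p hp hp'
    rw [Finset.mem_product, Finset.mem_singleton] at hp hp'
    exact hab (hp.1.symm.trans hp'.1)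

lemma lowSet_inter (μ ν : α → ℕ) :
    lowSet μ ∩ lowSet ν = lowSet (fun y => min (μ y) (ν y)) := by
  ext p
  simp only [lowSet, Set.mem_inter_iff, Set.mem_setOf_eq, lt_min_iff]

lemma lowSet_union (μ ν : α → ℕ) :
    lowSet μ ∪ lowSet ν = lowSet (fun y => max (μ y) (ν y)) := by
  ext p
  simp only [lowSet, Set.mem_union, Set.mem_setOf_eq, lt_max_iff]

/-- From normalized finitely supported functions with small `ℓ¹`-variation,
produce a property-A family of sets. -/
lemma funToSets {Z : Type*} [MetricSpace Z] {R ε S : ℝ} {N : ℕ}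
    (hε : 0 < ε) (hS : 0 < S)
    (φ : Z → Z →₀ ℝ) (hpos : ∀ x y, 0 ≤ φ x y) (hmass : ∀ x, tot (φ x) = 1)
    (hsupp : ∀ x y, φ x y ≠ 0 → dist x y ≤ S)
    (hcard : ∀ x, (φ x).support.card ≤ N)
    (hvar : ∀ x y, dist x y < R → l1 (φ x - φ y) ≤ min (ε/4) (1/2)) :
    ∃ A : Z → Set (Z × ℕ),
      (∀ x, (A x).Finite ∧ (A x).Nonempty) ∧
      (∀ x y : Z, dist x y < R →
        ((symmDiff (A x) (A y)).ncard : ℝ) < ε * ((A x ∩ A y).ncard : ℝ)) ∧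
      ∃ S' > (0:ℝ), ∀ x : Z, ∀ p ∈ A x, dist x p.1 ≤ S' := by
  classical
  set M : ℕ := ⌈(8*(N:ℝ)+8)/ε⌉₊ + 1 with hM
  have hM1 : 1 ≤ M := le_add_self
  have hMR : (8*(N:ℝ)+8)/ε < M := by
    calc (8*(N:ℝ)+8)/ε ≤ (⌈(8*(N:ℝ)+8)/ε⌉₊ : ℝ) := Nat.le_ceil _
      _ < M := by rw [hM]; push_cast; linarith
  have hMpos : (0:ℝ) < M := by
    calc (0:ℝ) < 1 := one_pos
      _ ≤ M := by exact_mod_cast hM1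
  have hεM : 8*(N:ℝ) + 8 < ε * M := by
    rw [div_lt_iff₀ hε] at hMR; linarith
  set m : Z → Z → ℕ := fun x y => ⌈(M:ℝ) * φ x y⌉₊ with hm
  have hm0 : ∀ x y, m x y ≠ 0 → y ∈ (φ x).support := by
    intro x y h
    rw [Finsupp.mem_support_iff]
    intro h0
    rw [hm] at h
    simp [h0] at h
  set A : Z → Set (Z × ℕ) := fun x => lowSet (m x) with hA
  have hfin : ∀ x, (A x).Finite := fun x => lowSet_finite _ _ (hm0 x)
  refine ⟨A, fun x => ⟨hfin x, ?_⟩, ?_, S, hS, ?_⟩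
  · -- nonempty
    have h1 : (φ x).support.Nonempty := by
      rw [Finset.nonempty_iff_ne_empty]
      intro h0
      have := hmass x
      rw [tot, h0] at this
      simp at this
    obtain ⟨y, hy⟩ := h1
    have hy0 : 0 < φ x y := lt_of_le_of_ne (hpos x y)
      (Ne.symm (Finsupp.mem_support_iff.mp hy))
    have : 0 < m x y := by
      rw [hm]
      simp only [Nat.ceil_pos]
      positivity
    exact ⟨(y, 0), this⟩
  · -- main estimate
    intro x y hxy
    set u : Finset Z := (φ x).support ∪ (φ y).support with hu
    have hmx : ∀ z, m x z ≠ 0 → z ∈ u := fun z hz =>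
      Finset.mem_union_left _ (hm0 x z hz)
    have hmy : ∀ z, m y z ≠ 0 → z ∈ u := fun z hz =>
      Finset.mem_union_right _ (hm0 y z hz)
    have hmmin : ∀ z, min (m x z) (m y z) ≠ 0 → z ∈ u := by
      intro z hz
      rcases Nat.eq_zero_or_pos (m x z) with h | h
      · rw [h] at hz; simp at hz
      · exact hmx z (by omega)
    have hmmax : ∀ z, max (m x z) (m y z) ≠ 0 → z ∈ u := by
      intro z hz
      rcases Nat.eq_zero_or_pos (m x z) with h | h
      · refine hmy z ?_
        rw [h] at hz
        simpa using hz
      · exact hmx z (by omega)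
    -- cardinalities
    have hcap : (A x ∩ A y).ncard = ∑ z ∈ u, min (m x z) (m y z) := by
      rw [hA]; dsimp only; rw [lowSet_inter, ncard_lowSet _ u hmmin]
    have hcup : (A x ∪ A y).ncard = ∑ z ∈ u, max (m x z) (m y z) := by
      rw [hA]; dsimp only; rw [lowSet_union, ncard_lowSet _ u hmmax]
    have hΔcard : (symmDiff (A x) (A y)).ncard
        = ∑ z ∈ u, max (m x z) (m y z) - ∑ z ∈ u, min (m x z) (m y z) := by
      rw [symmDiff_eq_sup_sdiff_inf]
      have : ((A x ⊔ A y) \ (A x ⊓ A y)).ncard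
          = (A x ∪ A y).ncard - (A x ∩ A y).ncard := by
        refine Set.ncard_diff ?_ ?_
        · exact inf_le_sup
        · exact (hfin x).inter_of_left _
      rw [this, hcap, hcup]
    have hminle : ∑ z ∈ u, min (m x z) (m y z) ≤ ∑ z ∈ u, max (m x z) (m y z) :=
      Finset.sum_le_sum fun z _ => le_trans (min_le_left _ _) (le_max_left _ _)
    have hΔR : ((symmDiff (A x) (A y)).ncard : ℝ)
        = ∑ z ∈ u, (((max (m x z) (m y z) : ℕ) : ℝ)
          - ((min (m x z) (m y z) : ℕ) : ℝ)) := by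
      rw [hΔcard, Nat.cast_sub hminle, Finset.sum_sub_distrib]
      push_cast
      ring
    have hl1 : l1 (φ x - φ y) = ∑ z ∈ u, |φ x z - φ y z| := by
      rw [l1_eq_sum (t := u) Finsupp.support_sub]
      exact Finset.sum_congr rfl fun z _ => by rw [Finsupp.sub_apply]
    have hv := hvar x y hxy
    have hv4 : l1 (φ x - φ y) ≤ ε/4 := le_trans hv (min_le_left _ _)
    have hvhalf : l1 (φ x - φ y) ≤ 1/2 := le_trans hv (min_le_right _ _)
    have hv0 : 0 ≤ l1 (φ x - φ y) := l1_nonneg _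
    have hcardu : (u.card : ℝ) ≤ 2 * N := by
      have h8 := Finset.card_union_le (φ x).support (φ y).support
      have h9 := hcard x
      have h10 := hcard y
      have : u.card ≤ 2 * N := by rw [hu]; omega
      exact_mod_cast this
    have hceil : ∀ a b : ℝ, 0 ≤ a → 0 ≤ b →
        |(⌈a⌉₊:ℝ) - (⌈b⌉₊:ℝ)| ≤ |a - b| + 1 := by
      intro a b ha hb
      rw [abs_sub_le_iff]
      have h1 := Nat.ceil_lt_add_one ha
      have h2 := Nat.le_ceil b
      have h3 := Nat.ceil_lt_add_one hb
      have h4 := Nat.le_ceil a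
      have h5 := le_abs_self (a - b)
      have h6 := le_abs_self (b - a)
      have h7 : |b - a| = |a - b| := abs_sub_comm b a
      constructor <;> linarith
    have hup : ((symmDiff (A x) (A y)).ncard : ℝ)
        ≤ (M:ℝ) * l1 (φ x - φ y) + 2 * N := by
      rw [hΔR]
      have hterm : ∀ z ∈ u,
          ((max (m x z) (m y z) : ℕ) : ℝ) - ((min (m x z) (m y z) : ℕ) : ℝ)
          ≤ (M:ℝ) * |φ x z - φ y z| + 1 := by
        intro z _
        have hmax : ((max (m x z) (m y z) : ℕ) : ℝ) - ((min (m x z) (m y z) : ℕ) : ℝ)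
            = |((m x z : ℕ):ℝ) - ((m y z : ℕ):ℝ)| := by
          push_cast
          rw [abs_sub_comm]
          exact max_sub_min_eq_abs ((m x z : ℕ):ℝ) ((m y z : ℕ):ℝ)
        rw [hmax]
        have hmxz : ((m x z : ℕ):ℝ) = (⌈(M:ℝ) * φ x z⌉₊ : ℝ) := by rw [hm]
        have hmyz : ((m y z : ℕ):ℝ) = (⌈(M:ℝ) * φ y z⌉₊ : ℝ) := by rw [hm]
        rw [hmxz, hmyz]
        have ha : (0:ℝ) ≤ (M:ℝ) * φ x z := mul_nonneg (le_of_lt hMpos) (hpos x z)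
        have hb : (0:ℝ) ≤ (M:ℝ) * φ y z := mul_nonneg (le_of_lt hMpos) (hpos y z)
        refine le_trans (hceil _ _ ha hb) ?_
        rw [← mul_sub, abs_mul, abs_of_pos hMpos]
      refine le_trans (Finset.sum_le_sum hterm) ?_
      rw [Finset.sum_add_distrib, ← Finset.mul_sum, ← hl1]
      simp only [Finset.sum_const, nsmul_eq_mul, mul_one]
      linarith
    have hlow : (M:ℝ) * (1 - l1 (φ x - φ y)) ≤ ((A x ∩ A y).ncard : ℝ) := by
      rw [hcap]
      have hRHS : ((∑ z ∈ u, min (m x z) (m y z) : ℕ) : ℝ)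
          = ∑ z ∈ u, min ((m x z : ℕ):ℝ) ((m y z : ℕ):ℝ) := by
        push_cast
        rfl
      rw [hRHS]
      have hterm : ∀ z ∈ u,
          (M:ℝ) * φ x z - (M:ℝ) * |φ x z - φ y z|
          ≤ min ((m x z : ℕ):ℝ) ((m y z : ℕ):ℝ) := by
        intro z _
        have hmxz : ((m x z : ℕ):ℝ) = (⌈(M:ℝ) * φ x z⌉₊ : ℝ) := by rw [hm]
        have hmyz : ((m y z : ℕ):ℝ) = (⌈(M:ℝ) * φ y z⌉₊ : ℝ) := by rw [hm]
        rw [hmxz, hmyz, le_min_iff]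
        have h4x := Nat.le_ceil ((M:ℝ) * φ x z)
        have h4y := Nat.le_ceil ((M:ℝ) * φ y z)
        have h5 : (M:ℝ) * φ x z - (M:ℝ) * φ y z ≤ (M:ℝ) * |φ x z - φ y z| := by
          rw [← mul_sub]
          exact mul_le_mul_of_nonneg_left (le_abs_self _) (le_of_lt hMpos)
        have h6 : 0 ≤ (M:ℝ) * |φ x z - φ y z| :=
          mul_nonneg (le_of_lt hMpos) (abs_nonneg _)
        constructor <;> linarith
      have hsum : ∑ z ∈ u, ((M:ℝ) * φ x z - (M:ℝ) * |φ x z - φ y z|)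
          = (M:ℝ) * (1 - l1 (φ x - φ y)) := by
        rw [Finset.sum_sub_distrib, ← Finset.mul_sum, ← Finset.mul_sum, ← hl1]
        have h7 : ∑ z ∈ u, φ x z = 1 := by
          rw [← tot_eq_sum (t := u) (Finset.subset_union_left), hmass x]
        rw [h7]
        ring
      calc (M:ℝ) * (1 - l1 (φ x - φ y))
          = ∑ z ∈ u, ((M:ℝ) * φ x z - (M:ℝ) * |φ x z - φ y z|) := hsum.symm
        _ ≤ ∑ z ∈ u, min ((m x z : ℕ):ℝ) ((m y z : ℕ):ℝ) :=
            Finset.sum_le_sum hterm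
    have hMv : (M:ℝ) * l1 (φ x - φ y) ≤ (M:ℝ) * (ε/4) :=
      mul_le_mul_of_nonneg_left hv4 (le_of_lt hMpos)
    have hhalf : (M:ℝ)/2 ≤ (M:ℝ) * (1 - l1 (φ x - φ y)) := by nlinarith
    calc ((symmDiff (A x) (A y)).ncard : ℝ)
        ≤ (M:ℝ) * l1 (φ x - φ y) + 2 * N := hup
      _ < ε * M / 4 + ε * M / 4 := by
          refine add_lt_add_of_le_of_lt ?_ ?_
          · calc (M:ℝ) * l1 (φ x - φ y) ≤ (M:ℝ) * (ε/4) := hMv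
              _ = ε * M / 4 := by ring
          · linarith
      _ = ε * ((M:ℝ)/2) := by ring
      _ ≤ ε * ((M:ℝ) * (1 - l1 (φ x - φ y))) :=
          mul_le_mul_of_nonneg_left hhalf (le_of_lt hε)
      _ ≤ ε * ((A x ∩ A y).ncard : ℝ) :=
          mul_le_mul_of_nonneg_left hlow (le_of_lt hε)
  · -- distance bound
    intro x p hp
    have : m x p.1 ≠ 0 := by
      rw [hA] at hp
      simp only [lowSet, Set.mem_setOf_eq] at hp
      omega
    exact hsupp x p.1 (Finsupp.mem_support_iff.mp (hm0 x p.1 this))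


end PA

open PA

theorem stmt13 (X : Type) [MetricSpace X]
    (hud : UniformlyDiscrete X) (hbg : BoundedGeometry X)
    -- an enumeration of all finite subsets of `X`
    (eS : ℕ → Finset X) (heS : Function.Bijective eS)
    -- `F` is the disjoint union `Fin(X) = ⨿ᵢ Xᵢ`, via the bijection `ι`
    (F : Type) [MetricSpace F]
    (ι : ∀ i : ℕ, {x : X // x ∈ eS i} → F)
    (hbij : Function.Bijective
      (fun p : Σ i : ℕ, {x : X // x ∈ eS i} => ι p.1 p.2))
    -- the metric of `F` restricts to the metric of `X` on each piece `Xᵢ`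
    (hiso : ∀ (i : ℕ) (x y : {x : X // x ∈ eS i}),
      dist (ι i x) (ι i y) = dist x.1 y.1)
    -- for every `R > 0` all but finitely many pieces are at distance `> R`
    -- from the rest of `Fin(X)`
    (hsep : ∀ R > (0:ℝ),
      {i : ℕ | ∃ (x : {x : X // x ∈ eS i}) (j : ℕ) (y : {x : X // x ∈ eS j}),
        j ≠ i ∧ dist (ι i x) (ι j y) ≤ R}.Finite) :
    HasPropertyA X ↔ HasPropertyA F := by
  classical
  have hXinf : Infinite X := by
    have h1 : Infinite (Finset X) := Infinite.of_injective eS heS.injective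
    by_contra h
    rw [not_infinite_iff_finite] at h
    haveI := h
    haveI := h1
    haveI := Fintype.ofFinite X
    exact not_finite (Finset X)
  set σ : (Σ i : ℕ, {x : X // x ∈ eS i}) ≃ F := Equiv.ofBijective _ hbij with hσdef
  have hσ : ∀ p : Σ i : ℕ, {x : X // x ∈ eS i}, σ p = ι p.1 p.2 := fun _ => rfl
  obtain ⟨x0⟩ := (inferInstance : Nonempty X)
  obtain ⟨j0, hj0⟩ := heS.surjective {x0}
  have hFne : Nonempty F :=
    ⟨ι j0 ⟨x0, by rw [hj0]; exact Finset.mem_singleton_self x0⟩⟩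
  have hιinj : ∀ (i : ℕ) (a b : {x : X // x ∈ eS i}), ι i a = ι i b → a = b := by
    intro i a b h
    have h2 : (⟨i, a⟩ : Σ i : ℕ, {x : X // x ∈ eS i}) = ⟨i, b⟩ := hbij.injective h
    simpa using h2
  constructor
  · -- Forward: X has property A → F has property A
    intro hX R hR ε hε
    set ε₂ : ℝ := min (ε/8) (1/4) with hε₂
    have hε₂pos : 0 < ε₂ := lt_min (by linarith) (by norm_num)
    have h2e : 2 * ε₂ ≤ min (ε/4) (1/2) := by
      refine le_min ?_ ?_
      · have := min_le_left (ε/8) (1/4); linarith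
      · have := min_le_right (ε/8) (1/4); linarith
    obtain ⟨A, h1, h2, S, hS, h3⟩ := hX R hR ε₂ hε₂pos
    obtain ⟨φ, hpos, hmass, hsupp, hvar⟩ := setsToFun A h1 h2 h3
    obtain ⟨N, hN⟩ := hbg S hS
    have hballcard : ∀ x : X, ((hN x).1.toFinset).card ≤ N := by
      intro x
      have h4 := (hN x).2
      rwa [← Set.ncard_coe_finset, Set.Finite.coe_toFinset]
    set Bad : Set ℕ := {i : ℕ | ∃ (x : {x : X // x ∈ eS i}) (j : ℕ)
      (y : {x : X // x ∈ eS j}), j ≠ i ∧ dist (ι i x) (ι j y) ≤ R} with hBad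
    have hBadFin : Bad.Finite := hsep R hR
    set E : Set F := {z : F | (σ.symm z).1 ∈ Bad} with hE
    have hmemE : ∀ (i : ℕ) (xt : {x : X // x ∈ eS i}), i ∈ Bad → ι i xt ∈ E := by
      intro i xt hi
      rw [hE]
      have hs : σ.symm (ι i xt) = ⟨i, xt⟩ := by
        rw [Equiv.symm_apply_eq]; rfl
      simp only [Set.mem_setOf_eq, hs]
      exact hi
    have hEfin : E.Finite := by
      have hsub : E ⊆ ⋃ i ∈ Bad, Set.range (ι i) := by
        intro z hz
        rw [Set.mem_iUnion₂]
        refine ⟨(σ.symm z).1, hz, ⟨(σ.symm z).2, ?_⟩⟩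
        rw [← hσ]
        exact σ.apply_symm_apply z
      exact Set.Finite.subset
        (hBadFin.biUnion fun i _ => Set.finite_range (ι i)) hsub
    haveI := hFne
    set z₀ : F := if h : E.Nonempty then h.some else Classical.arbitrary F with hz₀
    have hz₀E : E.Nonempty → z₀ ∈ E := by
      intro h
      rw [hz₀, dif_pos h]
      exact h.some_mem
    obtain ⟨C, hC⟩ := Metric.isBounded_iff.mp hEfin.isBounded
    -- nearest point retractions
    have hnr : ∀ (i : ℕ) (w : X), (eS i).Nonempty →
        ∃ u : {x : X // x ∈ eS i}, ∀ u' ∈ eS i, dist w u.1 ≤ dist w u' := by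
      intro i w h
      obtain ⟨u, hu, hmin⟩ := Finset.exists_min_image (eS i) (fun u => dist w u) h
      exact ⟨⟨u, hu⟩, hmin⟩
    choose nr hnrmin using hnr
    set g : ℕ → X → F := fun i w =>
      if h : (eS i).Nonempty then ι i (nr i w h) else z₀ with hg
    set ψ : F → F →₀ ℝ := fun z => if (σ.symm z).1 ∈ Bad then Finsupp.single z₀ 1
      else Finsupp.mapDomain (g (σ.symm z).1) (φ ((σ.symm z).2 : X)) with hψ
    have hψgood : ∀ (i : ℕ) (xt : {x : X // x ∈ eS i}), i ∉ Bad →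
        ψ (ι i xt) = Finsupp.mapDomain (g i) (φ xt.1) := by
      intro i xt hi
      have hs : σ.symm (ι i xt) = ⟨i, xt⟩ := by
        rw [Equiv.symm_apply_eq]; rfl
      rw [hψ]
      dsimp only
      rw [hs]
      exact if_neg hi
    have hψbad : ∀ (i : ℕ) (xt : {x : X // x ∈ eS i}), i ∈ Bad →
        ψ (ι i xt) = Finsupp.single z₀ 1 := by
      intro i xt hi
      have hs : σ.symm (ι i xt) = ⟨i, xt⟩ := by
        rw [Equiv.symm_apply_eq]; rfl
      rw [hψ]
      dsimp only
      rw [hs]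
      exact if_pos hi
    -- the "good or bad" piece fact
    have hjeq : ∀ (i : ℕ) (xt : {x : X // x ∈ eS i}) (j : ℕ)
        (yt : {x : X // x ∈ eS j}), i ∉ Bad → dist (ι i xt) (ι j yt) ≤ R → j = i := by
      intro i xt j yt hi hd
      by_contra hne
      exact hi ⟨xt, j, yt, hne, hd⟩
    set S' : ℝ := max (max (2*S) C) S with hS'
    have hS'pos : 0 < S' := lt_of_lt_of_le hS (le_max_right _ _)
    set N' : ℕ := max N 1 with hN'
    refine funToSets (Z := F) (R := R) (N := N') hε hS'pos ψ ?_ ?_ ?_ ?_ ?_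
    · -- nonneg
      intro z y
      obtain ⟨⟨i, xt⟩, rfl⟩ := σ.surjective z
      simp only [hσ]
      by_cases hi : i ∈ Bad
      · rw [hψbad i xt hi, Finsupp.single_apply]
        split <;> norm_num
      · rw [hψgood i xt hi]
        exact mapDomain_nonneg (fun w => hpos _ w) y
    · -- mass
      intro z
      obtain ⟨⟨i, xt⟩, rfl⟩ := σ.surjective z
      simp only [hσ]
      by_cases hi : i ∈ Bad
      · rw [hψbad i xt hi, tot_single]
      · rw [hψgood i xt hi, tot_mapDomain, hmass]
    · -- support distance
      intro z y hne
      obtain ⟨⟨i, xt⟩, rfl⟩ := σ.surjective z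
      simp only [hσ] at hne ⊢
      by_cases hi : i ∈ Bad
      · rw [hψbad i xt hi, Finsupp.single_apply] at hne
        have hy : y = z₀ := by
          by_contra h
          rw [if_neg (fun hh => h hh.symm)] at hne
          exact hne rfl
        subst hy
        have hzE : ι i xt ∈ E := hmemE i xt hi
        have hEne : E.Nonempty := ⟨_, hzE⟩
        calc dist (ι i xt) z₀ ≤ C := hC hzE (hz₀E hEne)
          _ ≤ max (2*S) C := le_max_right _ _
          _ ≤ S' := le_max_left _ _
      · rw [hψgood i xt hi] at hne
        have hy := Finsupp.mapDomain_support (Finsupp.mem_support_iff.mpr hne)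
        obtain ⟨w, hw, rfl⟩ := Finset.mem_image.mp hy
        have hwS : dist (xt : X) w ≤ S :=
          hsupp _ w (Finsupp.mem_support_iff.mp hw)
        have hie : (eS i).Nonempty := ⟨xt.1, xt.2⟩
        have hgw : g i w = ι i (nr i w hie) := by
          rw [hg]; dsimp only; rw [dif_pos hie]
        rw [hgw, hiso]
        have hmin := hnrmin i w hie xt.1 xt.2
        calc dist (xt:X) (nr i w hie : X)
            ≤ dist (xt:X) w + dist w (nr i w hie : X) := dist_triangle _ _ _
          _ ≤ S + dist w (xt:X) := by
              have := hmin
              linarith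
          _ ≤ S + S := by rw [dist_comm w (xt:X)]; linarith
          _ ≤ max (2*S) C := by rw [two_mul] at *; exact le_max_left _ _
          _ ≤ S' := le_max_left _ _
    · -- support cardinality
      intro z
      obtain ⟨⟨i, xt⟩, rfl⟩ := σ.surjective z
      simp only [hσ]
      by_cases hi : i ∈ Bad
      · rw [hψbad i xt hi]
        calc (Finsupp.single z₀ (1:ℝ)).support.card
            ≤ ({z₀} : Finset F).card := Finset.card_le_card Finsupp.support_single_subset
          _ = 1 := Finset.card_singleton _
          _ ≤ N' := le_max_right _ _
      · rw [hψgood i xt hi]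
        have hsub : (φ (xt:X)).support ⊆ (hN (xt:X)).1.toFinset := by
          intro y hy
          rw [Set.Finite.mem_toFinset, Metric.mem_closedBall, dist_comm]
          exact hsupp _ y (Finsupp.mem_support_iff.mp hy)
        calc (Finsupp.mapDomain (g i) (φ (xt:X))).support.card
            ≤ ((φ (xt:X)).support.image (g i)).card :=
              Finset.card_le_card Finsupp.mapDomain_support
          _ ≤ (φ (xt:X)).support.card := Finset.card_image_le
          _ ≤ ((hN (xt:X)).1.toFinset).card := Finset.card_le_card hsub
          _ ≤ N := hballcard _
          _ ≤ N' := le_max_left _ _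
    · -- variation
      intro z z' hd
      obtain ⟨⟨i, xt⟩, rfl⟩ := σ.surjective z
      obtain ⟨⟨j, yt⟩, rfl⟩ := σ.surjective z'
      simp only [hσ] at hd ⊢
      by_cases hi : i ∈ Bad
      · by_cases hj : j ∈ Bad
        · rw [hψbad i xt hi, hψbad j yt hj, sub_self]
          have : l1 (0 : F →₀ ℝ) = 0 := by simp [l1]
          rw [this]
          have := hε₂pos
          linarith [h2e]
        · exfalso
          have := hjeq j yt i xt hj (by rw [dist_comm]; exact le_of_lt hd)
          exact hj (this ▸ hi)
      · have hji : j = i := hjeq i xt j yt hi (le_of_lt hd)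
        subst hji
        rw [hψgood j xt hi, hψgood j yt hi, ← mapDomain_sub]
        refine le_trans (le_trans (l1_mapDomain_le _ _) ?_) h2e
        refine hvar _ _ ?_
        rw [← hiso j xt yt]
        exact hd
  · -- Converse: F has property A → X has property A
    intro hF R hR ε hε
    set ε₂ : ℝ := min (ε/8) (1/4) with hε₂
    have hε₂pos : 0 < ε₂ := lt_min (by linarith) (by norm_num)
    have h2e : 2 * ε₂ ≤ min (ε/4) (1/2) := by
      refine le_min ?_ ?_
      · have := min_le_left (ε/8) (1/4); linarith
      · have := min_le_right (ε/8) (1/4); linarith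
    obtain ⟨B, hB1, hB2, S, hS, hB3⟩ := hF R hR ε₂ hε₂pos
    obtain ⟨ψ, hψpos, hψtot, hψsupp, hψvar⟩ := setsToFun B hB1 hB2 hB3
    set Bad : Set ℕ := {i : ℕ | ∃ (x : {x : X // x ∈ eS i}) (j : ℕ)
      (y : {x : X // x ∈ eS j}), j ≠ i ∧ dist (ι i x) (ι j y) ≤ S} with hBad
    have hBadFin : Bad.Finite := hsep S hS
    obtain ⟨N, hN⟩ := hbg S hS
    set D : X → Finset X := fun x => (hN x).1.toFinset with hD
    have hDmem : ∀ x y : X, y ∈ D x ↔ dist x y ≤ S := by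
      intro x y
      rw [hD]
      dsimp only
      rw [Set.Finite.mem_toFinset, Metric.mem_closedBall, dist_comm]
    have hDcard : ∀ x : X, (D x).card ≤ N := by
      intro x
      have h4 := (hN x).2
      rw [hD]
      dsimp only
      rwa [← Set.ncard_coe_finset, Set.Finite.coe_toFinset]
    -- a denumeration of X
    have hcount : Countable X := by
      have hginj : Function.Injective
          (fun x : X => (Equiv.ofBijective eS heS).symm {x}) := by
        intro a b h
        exact Finset.singleton_injective ((Equiv.ofBijective eS heS).symm.injective h)
      exact ⟨⟨_, hginj⟩⟩
    obtain ⟨den⟩ := nonempty_denumerable_iff.mpr ⟨hcount, hXinf⟩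
    set enn : X ≃ ℕ := Denumerable.eqv X with henn
    set K : ℕ → Finset X := fun n => (Finset.range (n+1)).image enn.symm with hK
    have hKmem : ∀ (x : X) (n : ℕ), enn x ≤ n → x ∈ K n := by
      intro x n h
      rw [hK]
      dsimp only
      exact Finset.mem_image.mpr ⟨enn x, Finset.mem_range.mpr (by omega),
        enn.symm_apply_apply x⟩
    -- good indices containing K n
    have hgood : ∀ n : ℕ, ∃ i : ℕ, i ∉ Bad ∧ K n ⊆ eS i := by
      intro n
      haveI hct : Infinite {x : X // x ∉ K n} :=
        Set.infinite_coe_iff.mpr ((Finset.finite_toSet (K n)).infinite_compl)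
      have hinj : Function.Injective (fun s : Finset {x : X // x ∉ K n} =>
          K n ∪ s.map (Function.Embedding.subtype _)) := by
        intro s t h
        dsimp only at h
        refine Finset.map_injective (Function.Embedding.subtype _) ?_
        ext a
        have hmem : ∀ (u : Finset {x : X // x ∉ K n}) (b : X),
            b ∈ u.map (Function.Embedding.subtype _) → b ∉ K n := by
          intro u b hb
          obtain ⟨c, _, rfl⟩ := Finset.mem_map.mp hb
          exact c.2
        constructor
        · intro ha
          have h5 : a ∈ K n ∪ t.map (Function.Embedding.subtype _) := by
            rw [← h]
            exact Finset.mem_union_right _ ha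
          rcases Finset.mem_union.mp h5 with h6 | h6
          · exact absurd h6 (hmem s a ha)
          · exact h6
        · intro ha
          have h5 : a ∈ K n ∪ s.map (Function.Embedding.subtype _) := by
            rw [h]
            exact Finset.mem_union_right _ ha
          rcases Finset.mem_union.mp h5 with h6 | h6
          · exact absurd h6 (hmem t a ha)
          · exact h6
      have hsupinf : {T : Finset X | K n ⊆ T}.Infinite :=
        Set.infinite_of_injective_forall_mem hinj
          (fun s => Finset.subset_union_left)
      have hpre : {i : ℕ | K n ⊆ eS i}.Infinite := by
        have heq : {i : ℕ | K n ⊆ eS i} = eS ⁻¹' {T : Finset X | K n ⊆ T} := rfl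
        rw [heq]
        exact hsupinf.preimage (fun T _ => heS.surjective T)
      obtain ⟨i, hi⟩ := (hpre.diff hBadFin).nonempty
      exact ⟨i, hi.2, hi.1⟩
    choose iK hiBad hiKsub using hgood
    -- local coefficient functions
    set cf : ∀ n : ℕ, {x : X // x ∈ eS (iK n)} → X → ℝ := fun n xt y =>
      if h : y ∈ eS (iK n) then ψ (ι (iK n) xt) (ι (iK n) ⟨y, h⟩) else 0 with hcf
    set q : ∀ n : ℕ, {x : X // x ∈ eS (iK n)} → (X →₀ ℝ) := fun n xt =>
      ∑ y ∈ eS (iK n), Finsupp.single y (cf n xt y) with hq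
    set φn : ℕ → X → (X →₀ ℝ) := fun n x =>
      if h : x ∈ K n then q n ⟨x, hiKsub n h⟩ else 0 with hφn
    have hqapply : ∀ n xt y, q n xt y = cf n xt y := by
      intro n xt y
      rw [hq]
      dsimp only
      rw [sumsingle_apply]
      by_cases h : y ∈ eS (iK n)
      · rw [if_pos h]
      · rw [if_neg h, hcf]
        dsimp only
        rw [dif_neg h]
    have hcfpos : ∀ n xt y, 0 ≤ cf n xt y := by
      intro n xt y
      rw [hcf]
      dsimp only
      split
      · exact hψpos _ _
      · exact le_refl 0
    have hcfsupp : ∀ n xt y, cf n xt y ≠ 0 → dist (xt : X) y ≤ S := by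
      intro n xt y h
      rw [hcf] at h
      dsimp only at h
      by_cases hy : y ∈ eS (iK n)
      · rw [dif_pos hy] at h
        have h5 := hψsupp _ _ h
        rwa [hiso] at h5
      · rw [dif_neg hy] at h
        exact absurd rfl h
    have hcfD : ∀ n xt y, cf n xt y ≠ 0 → y ∈ D (xt : X) := by
      intro n xt y h
      exact (hDmem _ y).mpr (hcfsupp n xt y h)
    -- supports live in one piece
    have hpiece : ∀ n (xt : {x : X // x ∈ eS (iK n)}) (u : F),
        ψ (ι (iK n) xt) u ≠ 0 → ∃ w : {x : X // x ∈ eS (iK n)}, u = ι (iK n) w := by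
      intro n xt u hu
      obtain ⟨⟨j, w⟩, rfl⟩ := σ.surjective u
      simp only [hσ] at hu ⊢
      by_cases hj : j = iK n
      · subst hj
        exact ⟨w, rfl⟩
      · exfalso
        exact hiBad n ⟨xt, j, w, hj, hψsupp _ _ hu⟩
    have hqtot : ∀ n xt, tot (q n xt) = 1 := by
      intro n xt
      rw [hq]
      dsimp only
      rw [tot_sum]
      simp_rw [tot_single]
      have himg : (ψ (ι (iK n) xt)).support
          ⊆ (eS (iK n)).attach.image (fun w => ι (iK n) w) := by
        intro u hu
        obtain ⟨w, rfl⟩ := hpiece n xt u (Finsupp.mem_support_iff.mp hu)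
        exact Finset.mem_image.mpr ⟨w, Finset.mem_attach _ _, rfl⟩
      have h1 : tot (ψ (ι (iK n) xt))
          = ∑ u ∈ (eS (iK n)).attach.image (fun w => ι (iK n) w),
            ψ (ι (iK n) xt) u := tot_eq_sum himg
      have h2' : ∑ u ∈ (eS (iK n)).attach.image (fun w => ι (iK n) w),
            ψ (ι (iK n) xt) u
          = ∑ w ∈ (eS (iK n)).attach, ψ (ι (iK n) xt) (ι (iK n) w) :=
        Finset.sum_image (fun a _ b _ hab => hιinj _ _ _ hab)
      have h3 : ∑ y ∈ eS (iK n), cf n xt y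
          = ∑ w ∈ (eS (iK n)).attach, cf n xt w.1 :=
        (Finset.sum_attach _ _).symm
      have h4 : ∀ w : {x : X // x ∈ eS (iK n)},
          cf n xt w.1 = ψ (ι (iK n) xt) (ι (iK n) w) := by
        intro w
        rw [hcf]
        dsimp only
        rw [dif_pos w.2]
      rw [h3]
      rw [Finset.sum_congr rfl (fun w _ => h4 w), ← h2', ← h1, hψtot]
    have hqvar : ∀ n (xt yt : {x : X // x ∈ eS (iK n)}),
        dist (xt : X) (yt : X) < R → l1 (q n xt - q n yt) ≤ 2 * ε₂ := by
      intro n xt yt hd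
      have hz : dist (ι (iK n) xt) (ι (iK n) yt) < R := by
        rw [hiso]
        exact hd
      have hvF := hψvar _ _ hz
      have hsub : (q n xt - q n yt).support ⊆ eS (iK n) := by
        intro y hy
        rw [Finsupp.mem_support_iff, Finsupp.sub_apply, hqapply, hqapply] at hy
        by_contra hyn
        rw [hcf] at hy
        dsimp only at hy
        rw [dif_neg hyn, dif_neg hyn, sub_self] at hy
        exact hy rfl
      have himg : (ψ (ι (iK n) xt) - ψ (ι (iK n) yt)).support
          ⊆ (eS (iK n)).attach.image (fun w => ι (iK n) w) := by
        intro u hu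
        have h5 := Finsupp.support_sub hu
        rcases Finset.mem_union.mp h5 with h6 | h6
        · obtain ⟨w, rfl⟩ := hpiece n xt u (Finsupp.mem_support_iff.mp h6)
          exact Finset.mem_image.mpr ⟨w, Finset.mem_attach _ _, rfl⟩
        · obtain ⟨w, rfl⟩ := hpiece n yt u (Finsupp.mem_support_iff.mp h6)
          exact Finset.mem_image.mpr ⟨w, Finset.mem_attach _ _, rfl⟩
      have hl1F : l1 (ψ (ι (iK n) xt) - ψ (ι (iK n) yt))
          = ∑ w ∈ (eS (iK n)).attach,
            |ψ (ι (iK n) xt) (ι (iK n) w) - ψ (ι (iK n) yt) (ι (iK n) w)| := by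
        rw [l1_eq_sum himg, Finset.sum_image (fun a _ b _ hab => hιinj _ _ _ hab)]
        refine Finset.sum_congr rfl fun w _ => ?_
        rw [Finsupp.sub_apply]
      have h4 : ∀ w : {x : X // x ∈ eS (iK n)},
          |(q n xt - q n yt) w.1|
          = |ψ (ι (iK n) xt) (ι (iK n) w) - ψ (ι (iK n) yt) (ι (iK n) w)| := by
        intro w
        rw [Finsupp.sub_apply, hqapply, hqapply, hcf]
        dsimp only
        rw [dif_pos w.2, dif_pos w.2]
      calc l1 (q n xt - q n yt)
          = ∑ y ∈ eS (iK n), |(q n xt - q n yt) y| := l1_eq_sum hsub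
        _ = ∑ w ∈ (eS (iK n)).attach, |(q n xt - q n yt) w.1| :=
            (Finset.sum_attach _ _).symm
        _ = ∑ w ∈ (eS (iK n)).attach,
            |ψ (ι (iK n) xt) (ι (iK n) w) - ψ (ι (iK n) yt) (ι (iK n) w)| :=
            Finset.sum_congr rfl fun w _ => h4 w
        _ = l1 (ψ (ι (iK n) xt) - ψ (ι (iK n) yt)) := hl1F.symm
        _ ≤ 2 * ε₂ := hvF
    -- ultrafilter limits
    set U : Ultrafilter ℕ := Ultrafilter.of Filter.cofinite with hU
    have hUle : (U : Filter ℕ) ≤ Filter.cofinite := Ultrafilter.of_le _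
    have hmemK : ∀ x : X, {n : ℕ | x ∈ K n} ∈ (U : Filter ℕ) := by
      intro x
      refine hUle ?_
      rw [Filter.mem_cofinite]
      refine Set.Finite.subset (Set.finite_Icc 0 (enn x)) ?_
      intro n hn
      simp only [Set.mem_compl_iff, Set.mem_setOf_eq] at hn
      have h5 : n < enn x := by
        by_contra h6
        push_neg at h6
        exact hn (hKmem x n h6)
      exact ⟨Nat.zero_le n, le_of_lt h5⟩
    have hφn01 : ∀ n x y, φn n x y ∈ Set.Icc (0:ℝ) 1 := by
      intro n x y
      rw [hφn]
      dsimp only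
      by_cases h : x ∈ K n
      · rw [dif_pos h]
        constructor
        · rw [hqapply]
          exact hcfpos n _ y
        · calc q n ⟨x, hiKsub n h⟩ y
              ≤ tot (q n ⟨x, hiKsub n h⟩) := by
                refine apply_le_tot ?_ y
                intro w
                rw [hqapply]
                exact hcfpos n _ w
            _ = 1 := hqtot n _
      · rw [dif_neg h]
        simp
    have hlim : ∀ x y : X, ∃ r ∈ Set.Icc (0:ℝ) 1,
        Filter.Tendsto (fun n => φn n x y) (U : Filter ℕ) (nhds r) := by
      intro x y
      obtain ⟨r, hr, hconv⟩ := (isCompact_Icc (a := (0:ℝ)) (b := 1)).ultrafilter_le_nhds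
        (U.map (fun n => φn n x y)) (by
          rw [Ultrafilter.coe_map, Filter.le_principal_iff, Filter.mem_map]
          exact Filter.univ_mem' (fun n => hφn01 n x y))
      refine ⟨r, hr, ?_⟩
      rwa [Ultrafilter.coe_map] at hconv
    choose L hL01 hLtend using hlim
    have hL0 : ∀ x y, y ∉ D x → L x y = 0 := by
      intro x y hy
      refine tendsto_nhds_unique (hLtend x y) ?_
      have hev : ∀ᶠ n in (U : Filter ℕ), φn n x y = 0 := by
        filter_upwards [hmemK x] with n hn
        rw [hφn]
        dsimp only
        rw [dif_pos hn, hqapply]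
        by_contra h
        exact hy (hcfD n _ y h)
      exact Filter.Tendsto.congr' (hev.mono fun n hn => hn.symm) tendsto_const_nhds
    set φZ : X → X →₀ ℝ := fun x => ∑ y ∈ D x, Finsupp.single y (L x y) with hφZ
    have hφZapply : ∀ x y, φZ x y = L x y := by
      intro x y
      rw [hφZ]
      dsimp only
      rw [sumsingle_apply]
      by_cases h : y ∈ D x
      · rw [if_pos h]
      · rw [if_neg h, hL0 x y h]
    have hφZsupp : ∀ x, (φZ x).support ⊆ D x := fun x => sumsingle_support _ _
    refine funToSets (Z := X) (R := R) (N := N) hε hS φZ ?_ ?_ ?_ ?_ ?_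
    · intro x y
      rw [hφZapply]
      exact (hL01 x y).1
    · -- mass
      intro x
      have h1 : tot (φZ x) = ∑ y ∈ D x, L x y := by
        rw [tot_eq_sum (hφZsupp x)]
        exact Finset.sum_congr rfl fun y _ => hφZapply x y
      rw [h1]
      have htend : Filter.Tendsto (fun n => ∑ y ∈ D x, φn n x y) (U : Filter ℕ)
          (nhds (∑ y ∈ D x, L x y)) :=
        tendsto_finset_sum _ (fun y _ => hLtend x y)
      have hev : ∀ᶠ n in (U : Filter ℕ), (∑ y ∈ D x, φn n x y) = 1 := by
        filter_upwards [hmemK x] with n hn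
        have hsub : (q n ⟨x, hiKsub n hn⟩).support ⊆ D x := by
          intro y hy
          rw [Finsupp.mem_support_iff, hqapply] at hy
          exact hcfD n _ y hy
        have h6 : ∑ y ∈ D x, φn n x y = tot (q n ⟨x, hiKsub n hn⟩) := by
          rw [tot_eq_sum hsub]
          refine Finset.sum_congr rfl fun y _ => ?_
          rw [hφn]
          dsimp only
          rw [dif_pos hn]
        rw [h6, hqtot]
      exact tendsto_nhds_unique htend
        (Filter.Tendsto.congr' (hev.mono fun n hn => hn.symm) tendsto_const_nhds)
    · -- support distance
      intro x y h
      have hy : y ∈ D x := hφZsupp x (Finsupp.mem_support_iff.mpr h)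
      exact (hDmem x y).mp hy
    · -- support cardinality
      intro x
      exact le_trans (Finset.card_le_card (hφZsupp x)) (hDcard x)
    · -- variation
      intro x x' hd
      refine le_trans ?_ h2e
      have hsub : (φZ x - φZ x').support ⊆ D x ∪ D x' :=
        subset_trans Finsupp.support_sub
          (Finset.union_subset_union (hφZsupp x) (hφZsupp x'))
      rw [l1_eq_sum hsub]
      have htend : Filter.Tendsto
          (fun n => ∑ y ∈ D x ∪ D x', |φn n x y - φn n x' y|) (U : Filter ℕ)
          (nhds (∑ y ∈ D x ∪ D x', |(φZ x - φZ x') y|)) := by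
        refine tendsto_finset_sum _ fun y _ => ?_
        have h7 := ((hLtend x y).sub (hLtend x' y)).abs
        have h8 : |(φZ x - φZ x') y| = |L x y - L x' y| := by
          rw [Finsupp.sub_apply, hφZapply, hφZapply]
        rw [h8]
        exact h7
      refine le_of_tendsto htend ?_
      filter_upwards [hmemK x, hmemK x'] with n hn hn'
      have heq : ∀ y ∈ D x ∪ D x',
          |φn n x y - φn n x' y|
          = |(q n ⟨x, hiKsub n hn⟩ - q n ⟨x', hiKsub n hn'⟩) y| := by
        intro y _
        rw [hφn]
        dsimp only
        rw [dif_pos hn, dif_pos hn', Finsupp.sub_apply]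
      rw [Finset.sum_congr rfl heq]
      have hsub2 : (q n ⟨x, hiKsub n hn⟩ - q n ⟨x', hiKsub n hn'⟩).support
          ⊆ D x ∪ D x' := by
        intro y hy
        rw [Finsupp.mem_support_iff, Finsupp.sub_apply, hqapply, hqapply] at hy
        rcases ne_or_eq (cf n ⟨x, hiKsub n hn⟩ y) 0 with h9 | h9
        · exact Finset.mem_union_left _ (hcfD n _ y h9)
        · rw [h9, zero_sub, neg_ne_zero] at hy
          exact Finset.mem_union_right _ (hcfD n _ y hy)
      rw [← l1_eq_sum hsub2]
      exact hqvar n _ _ hd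
end

section
/- Let X be a countable uniformly discrete metric space and let G be a countable discrete group equipped with a proper left-invariant metric d_G. Then X admits a uniform embedding into G if and only if there exist an increasing sequence X_1 ⊆ X_2 ⊆ ⋯ of finite subsets of X with ⋃_i X_i = X and maps φ_i : X_i → G which are uniform embeddings uniformly in i, meaning: for every R > 0 there exists S > 0 such that for all i and all x, y ∈ X_i, d(x,y) ≤ R implies d_G(φ_i(x), φ_i(y)) ≤ S, and d_G(φ_i(x), φ_i(y)) ≤ R implies d(x,y) ≤ S. (Equivalently: X is uniformly embeddable in G if and only if X is locally uniformly embeddable in G.) -/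
open Metric

/-!
A uniform embedding restricts to any finite exhaustion of `X`. Conversely, translate each `φᵢ`
so that a base point `x₀` goes to `1`; left invariance keeps the distances, and the image of each
`x` then stays in a fixed ball around `1`, which is finite by properness. Along a free ultrafilter
on the indices each `φᵢ x` is therefore eventually constant, and its limit `ψ x` defines a map
each of whose pair distances is realised by some `φᵢ`, so `ψ` inherits the uniform bounds.
-/

open Filter

def IsLocallyUniformlyEmbeddable (X G : Type*) [MetricSpace X] [MetricSpace G] : Prop :=
  ∃ Xi : ℕ → Finset X,
    (∀ i j : ℕ, i ≤ j → Xi i ⊆ Xi j) ∧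
    (∀ x : X, ∃ i : ℕ, x ∈ Xi i) ∧
    ∃ φ : ∀ i : ℕ, {x : X // x ∈ Xi i} → G,
      (∀ R > (0:ℝ), ∃ S > (0:ℝ), ∀ (i : ℕ) (x y : {x : X // x ∈ Xi i}),
        dist x.1 y.1 ≤ R → dist (φ i x) (φ i y) ≤ S) ∧
      (∀ R > (0:ℝ), ∃ S > (0:ℝ), ∀ (i : ℕ) (x y : {x : X // x ∈ Xi i}),
        dist (φ i x) (φ i y) ≤ R → dist x.1 y.1 ≤ S)

lemma exists_monotone_finset_exhaustion (X : Type*) [Countable X] :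
    ∃ Xi : ℕ → Finset X, Monotone Xi ∧ ∀ x, ∃ i, x ∈ Xi i := by
  obtain ⟨e, he⟩ := Countable.exists_injective_nat X
  refine ⟨fun i => (Finset.range i).preimage e he.injOn, fun i j hij x hx => ?_,
    fun x => ⟨e x + 1, by simp⟩⟩
  simp only [Finset.mem_preimage, Finset.mem_range] at hx ⊢
  omega

lemma IsUniformEmbeddingMap.of_isEmpty {X Y : Type*} [MetricSpace X] [MetricSpace Y] [IsEmpty X]
    (f : X → Y) : IsUniformEmbeddingMap f :=
  ⟨fun _ _ => ⟨1, one_pos, isEmptyElim⟩, fun _ _ => ⟨1, one_pos, isEmptyElim⟩⟩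

section

variable {X G : Type*} [MetricSpace G]

theorem IsUniformEmbeddingMap.isLocallyUniformlyEmbeddable [MetricSpace X] [Countable X]
    {ψ : X → G} (hψ : IsUniformEmbeddingMap ψ) : IsLocallyUniformlyEmbeddable X G := by
  obtain ⟨Xi, hmono, hcover⟩ := exists_monotone_finset_exhaustion X
  refine ⟨Xi, fun i j hij => hmono hij, hcover, fun _ x => ψ x, fun R hR => ?_, fun R hR => ?_⟩
  · obtain ⟨S, hS, hbound⟩ := hψ.1 R hR
    exact ⟨S, hS, fun _ x y => hbound x y⟩
  · obtain ⟨S, hS, hbound⟩ := hψ.2 R hR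
    exact ⟨S, hS, fun _ x y => hbound x y⟩

lemma exists_eventually_eq_of_bounded {ι : Type*}
    (hproper : ∀ (y : G) (r : ℝ), (closedBall y r).Finite) (U : Ultrafilter ι)
    (f : ι → X → G) (y₀ : G) (hbdd : ∀ x, ∃ r, ∀ᶠ i in U, f i x ∈ closedBall y₀ r) :
    ∃ ψ : X → G, ∀ x, ∀ᶠ i in U, f i x = ψ x := by
  suffices h : ∀ x, ∃ a, ∀ᶠ i in U, f i x = a from Classical.skolem.1 h
  intro x
  obtain ⟨r, hr⟩ := hbdd x
  obtain ⟨a, -, ha⟩ := (U.eventually_exists_mem_iff (P := fun a i => f i x = a)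
    (hproper y₀ r)).1 (hr.mono fun i hi => ⟨f i x, hi, rfl⟩)
  exact ⟨a, ha⟩

lemma exists_normalized_extension [Group G]
    (hinv : ∀ g x y : G, dist (g * x) (g * y) = dist x y)
    {ι : Type*} (Xi : ι → Finset X) (φ : ∀ i, {x : X // x ∈ Xi i} → G) (x₀ : X) :
    ∃ f : ι → X → G, (∀ i, f i x₀ = 1) ∧ ∀ i x y (hx : x ∈ Xi i) (hy : y ∈ Xi i),
      dist (f i x) (f i y) = dist (φ i ⟨x, hx⟩) (φ i ⟨y, hy⟩) := by
  classical
  let ext : ι → X → G := fun i x => if h : x ∈ Xi i then φ i ⟨x, h⟩ else 1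
  refine ⟨fun i x => (ext i x₀)⁻¹ * ext i x, fun i => inv_mul_cancel _,
    fun i x y hx hy => ?_⟩
  rw [hinv]
  simp only [ext, dif_pos hx, dif_pos hy]

theorem IsLocallyUniformlyEmbeddable.exists_isUniformEmbeddingMap [MetricSpace X] [Group G]
    (hinv : ∀ g x y : G, dist (g * x) (g * y) = dist x y)
    (hproper : ∀ (x : G) (r : ℝ), (closedBall x r).Finite)
    (h : IsLocallyUniformlyEmbeddable X G) : ∃ ψ : X → G, IsUniformEmbeddingMap ψ := by
  rcases isEmpty_or_nonempty X with hX | ⟨⟨x₀⟩⟩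
  · exact ⟨isEmptyElim, .of_isEmpty _⟩
  obtain ⟨Xi, hmono, hcover, φ, hup, hdown⟩ := h
  let U := hyperfilter ℕ
  have hmem : ∀ x, ∀ᶠ i in U, x ∈ Xi i := fun x => by
    obtain ⟨i, hi⟩ := hcover x
    refine Eventually.filter_mono hyperfilter_le_cofinite ?_
    rw [Nat.cofinite_eq_atTop]
    exact eventually_atTop.2 ⟨i, fun j hj => hmono i j hj hi⟩
  obtain ⟨f, hf₀, hfdist⟩ := exists_normalized_extension hinv Xi φ x₀
  obtain ⟨ψ, hψ⟩ : ∃ ψ : X → G, ∀ x, ∀ᶠ i in U, f i x = ψ x := by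
    refine exists_eventually_eq_of_bounded hproper U f 1 fun x => ?_
    obtain ⟨S, -, hS⟩ := hup (dist x x₀ + 1) (by positivity)
    refine ⟨S, ((hmem x).and (hmem x₀)).mono fun i ⟨hx, hx₀⟩ => ?_⟩
    rw [mem_closedBall, ← hf₀ i, hfdist i x x₀ hx hx₀]
    exact hS i _ _ (le_add_of_nonneg_right zero_le_one)
  have hrealize : ∀ x y, ∃ i, ∃ (hx : x ∈ Xi i) (hy : y ∈ Xi i),
      dist (ψ x) (ψ y) = dist (φ i ⟨x, hx⟩) (φ i ⟨y, hy⟩) := fun x y => by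
    obtain ⟨i, hfx, hfy, hx, hy⟩ := ((hψ x).and ((hψ y).and ((hmem x).and (hmem y)))).exists
    exact ⟨i, hx, hy, by rw [← hfx, ← hfy, hfdist i x y hx hy]⟩
  refine ⟨ψ, fun R hR => ?_, fun R hR => ?_⟩
  · obtain ⟨S, hS, hbound⟩ := hup R hR
    refine ⟨S, hS, fun x y hxy => ?_⟩
    obtain ⟨i, hx, hy, hi⟩ := hrealize x y
    exact hi ▸ hbound i ⟨x, hx⟩ ⟨y, hy⟩ hxy
  · obtain ⟨S, hS, hbound⟩ := hdown R hR
    refine ⟨S, hS, fun x y hxy => ?_⟩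
    obtain ⟨i, hx, hy, hi⟩ := hrealize x y
    exact hbound i ⟨x, hx⟩ ⟨y, hy⟩ (hi ▸ hxy)

end

theorem stmt14_general (X : Type) [MetricSpace X] [Countable X]
    (G : Type) [Group G] [MetricSpace G]
    (hinv : ∀ g x y : G, dist (g * x) (g * y) = dist x y)
    (hproper : ∀ (x : G) (r : ℝ), (closedBall x r).Finite) :
    (∃ ψ : X → G, IsUniformEmbeddingMap ψ) ↔
    (∃ Xi : ℕ → Finset X,
      (∀ i j : ℕ, i ≤ j → Xi i ⊆ Xi j) ∧
      (∀ x : X, ∃ i : ℕ, x ∈ Xi i) ∧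
      ∃ φ : ∀ i : ℕ, {x : X // x ∈ Xi i} → G,
        (∀ R > (0:ℝ), ∃ S > (0:ℝ), ∀ (i : ℕ) (x y : {x : X // x ∈ Xi i}),
          dist x.1 y.1 ≤ R → dist (φ i x) (φ i y) ≤ S) ∧
        (∀ R > (0:ℝ), ∃ S > (0:ℝ), ∀ (i : ℕ) (x y : {x : X // x ∈ Xi i}),
          dist (φ i x) (φ i y) ≤ R → dist x.1 y.1 ≤ S)) :=
  ⟨fun ⟨_, hψ⟩ => hψ.isLocallyUniformlyEmbeddable,
    IsLocallyUniformlyEmbeddable.exists_isUniformEmbeddingMap hinv hproper⟩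

theorem stmt14 (X : Type) [MetricSpace X] [Countable X]
    (hud : UniformlyDiscrete X)
    (G : Type) [Group G] [Countable G] [MetricSpace G]
    (hinv : ∀ g x y : G, dist (g * x) (g * y) = dist x y)
    (hproper : ∀ (x : G) (r : ℝ), (closedBall x r).Finite) :
    (∃ ψ : X → G, IsUniformEmbeddingMap ψ) ↔
    (∃ Xi : ℕ → Finset X,
      (∀ i j : ℕ, i ≤ j → Xi i ⊆ Xi j) ∧
      (∀ x : X, ∃ i : ℕ, x ∈ Xi i) ∧
      ∃ φ : ∀ i : ℕ, {x : X // x ∈ Xi i} → G,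
        (∀ R > (0:ℝ), ∃ S > (0:ℝ), ∀ (i : ℕ) (x y : {x : X // x ∈ Xi i}),
          dist x.1 y.1 ≤ R → dist (φ i x) (φ i y) ≤ S) ∧
        (∀ R > (0:ℝ), ∃ S > (0:ℝ), ∀ (i : ℕ) (x y : {x : X // x ∈ Xi i}),
          dist (φ i x) (φ i y) ≤ R → dist x.1 y.1 ≤ S)) :=
  stmt14_general X G hinv hproper
end
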